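/- arXiv:2408.07763 — 7 statements merged into one kernel-verified Lean document; each statement's English description precedes it below -/
import Mathlib

section
/- For a random unit vector r uniformly distributed on the unit sphere in R^n (n ≥ 2), and two fixed unit vectors v_i, v_j with angle θ between them, the probability that sgn(⟨v_i, r⟩) ≠ sgn(⟨v_j, r⟩) equals θ/π. -/
open Real MeasureTheory RealInnerProductSpace

/-- The sign function: 1 if `0 ≤ x`, and -1 otherwise. -/
noncomputable def sgn (x : ℝ) : ℝ := if 0 ≤ x then 1 else -1

open scoped NNReal ENNReal

section Rot

variable {F : Type*} [NormedAddCommGroup F] [InnerProductSpace ℝ F]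

noncomputable def rotAux (a b : F) (t : ℝ) (x : F) : F :=
  x + ((Real.cos t - 1) * ⟪a, x⟫ - Real.sin t * ⟪b, x⟫) • a
    + (Real.sin t * ⟪a, x⟫ + (Real.cos t - 1) * ⟪b, x⟫) • b

lemma inner_self_one {a : F} (ha : ‖a‖ = 1) : ⟪a, a⟫ = 1 := by
  rw [real_inner_self_eq_norm_mul_norm, ha]; norm_num

lemma inner_rotAux_a {a b : F} (ha : ‖a‖ = 1) (hab : ⟪a, b⟫ = 0) (t : ℝ) (x : F) :
    ⟪a, rotAux a b t x⟫ = Real.cos t * ⟪a, x⟫ - Real.sin t * ⟪b, x⟫ := by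
  simp only [rotAux, inner_add_right, real_inner_smul_right, inner_self_one ha, hab]
  ring

lemma inner_rotAux_b {a b : F} (hb : ‖b‖ = 1) (hab : ⟪a, b⟫ = 0) (t : ℝ) (x : F) :
    ⟪b, rotAux a b t x⟫ = Real.sin t * ⟪a, x⟫ + Real.cos t * ⟪b, x⟫ := by
  have hba : ⟪b, a⟫ = 0 := by rw [real_inner_comm]; exact hab
  simp only [rotAux, inner_add_right, real_inner_smul_right, inner_self_one hb, hba]
  ring

lemma rotAux_inner {a b : F} (ha : ‖a‖ = 1) (hb : ‖b‖ = 1) (hab : ⟪a, b⟫ = 0) (t : ℝ) (x y : F) :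
    ⟪rotAux a b t x, rotAux a b t y⟫ = ⟪x, y⟫ := by
  have h := Real.sin_sq_add_cos_sq t
  have hba : ⟪b, a⟫ = 0 := by rw [real_inner_comm]; exact hab
  simp only [rotAux, inner_add_left, inner_add_right, real_inner_smul_left,
    real_inner_smul_right, inner_self_one ha, inner_self_one hb, hab, hba]
  rw [real_inner_comm x a, real_inner_comm x b]
  linear_combination (⟪x, a⟫ * ⟪a, y⟫ + ⟪x, b⟫ * ⟪b, y⟫ : ℝ) * h

lemma rotAux_rotAux {a b : F} (ha : ‖a‖ = 1) (hb : ‖b‖ = 1) (hab : ⟪a, b⟫ = 0) (t : ℝ) (x : F) :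
    rotAux a b (-t) (rotAux a b t x) = x := by
  have h := Real.sin_sq_add_cos_sq t
  have hba : ⟪b, a⟫ = 0 := by rw [real_inner_comm]; exact hab
  simp only [rotAux, inner_add_right, real_inner_smul_right, inner_self_one ha,
    inner_self_one hb, hab, hba, Real.cos_neg, Real.sin_neg]
  match_scalars
  · ring
  · linear_combination (⟪a, x⟫ : ℝ) * h
  · linear_combination (⟪b, x⟫ : ℝ) * h

lemma rotAux_add {a b : F} (t : ℝ) (x y : F) :
    rotAux a b t (x + y) = rotAux a b t x + rotAux a b t y := by
  simp only [rotAux, inner_add_right]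
  match_scalars <;> ring

lemma rotAux_smul {a b : F} (t : ℝ) (c : ℝ) (x : F) :
    rotAux a b t (c • x) = c • rotAux a b t x := by
  simp only [rotAux, inner_smul_right]
  match_scalars <;> ring

noncomputable def rotIso {a b : F} (ha : ‖a‖ = 1) (hb : ‖b‖ = 1) (hab : ⟪a, b⟫ = 0) (t : ℝ) :
    F ≃ₗᵢ[ℝ] F :=
  LinearEquiv.isometryOfInner
    { toFun := rotAux a b t
      map_add' := rotAux_add t
      map_smul' := rotAux_smul t
      invFun := rotAux a b (-t)
      left_inv := fun x => rotAux_rotAux ha hb hab t x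
      right_inv := fun x => by
        have := rotAux_rotAux ha hb hab (-t) x
        rwa [neg_neg] at this }
    (rotAux_inner ha hb hab t)

@[simp] lemma rotIso_apply {a b : F} (ha : ‖a‖ = 1) (hb : ‖b‖ = 1) (hab : ⟪a, b⟫ = 0) (t : ℝ)
    (x : F) : rotIso ha hb hab t x = rotAux a b t x := rfl

@[simp] lemma rotIso_symm_apply {a b : F} (ha : ‖a‖ = 1) (hb : ‖b‖ = 1) (hab : ⟪a, b⟫ = 0) (t : ℝ)
    (x : F) : (rotIso ha hb hab t).symm x = rotAux a b (-t) x := rfl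

lemma rotAux_fixed {a b : F} (t : ℝ) {x : F} (hax : ⟪a, x⟫ = 0) (hbx : ⟪b, x⟫ = 0) :
    rotAux a b t x = x := by simp [rotAux, hax, hbx]

lemma rotAux_a_eq {a b : F} (ha : ‖a‖ = 1) (hab : ⟪a, b⟫ = 0) (t : ℝ) :
    rotAux a b t a = Real.cos t • a + Real.sin t • b := by
  have hba : ⟪b, a⟫ = 0 := by rw [real_inner_comm]; exact hab
  simp only [rotAux, inner_self_one ha, hba]
  match_scalars <;> ring

lemma rotAux_b_eq {a b : F} (hb : ‖b‖ = 1) (hab : ⟪a, b⟫ = 0) (t : ℝ) :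
    rotAux a b t b = (-Real.sin t) • a + Real.cos t • b := by
  simp only [rotAux, inner_self_one hb, hab]
  match_scalars <;> ring

end Rot

section NullB

variable {n : ℕ}

local notation "E" => EuclideanSpace ℝ (Fin n)

lemma meas_inner_zero (c : E) : MeasurableSet {r : E | ⟪c, r⟫ = 0} := by
  have : Continuous fun r : E => ⟪c, r⟫ := Continuous.inner continuous_const continuous_id
  exact this.measurable (measurableSet_singleton 0)

lemma null_orth (μ : Measure E) [IsProbabilityMeasure μ]
    (hsph : μ (Metric.sphere (0 : E) 1) = 1)
    (hinv : ∀ T : E ≃ₗᵢ[ℝ] E, Measure.map T μ = μ) :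
    ∀ (m k : ℕ), 1 ≤ k → n ≤ k + m → ∀ f : Fin k → E, Orthonormal ℝ f →
      μ {r : E | ∀ i, ⟪f i, r⟫ = 0} = 0 := by
  intro m
  induction m with
  | zero =>
    intro k hk1 hkn f hf
    have hkle : k ≤ n := by
      have := hf.linearIndependent.fintype_card_le_finrank
      rw [finrank_euclideanSpace_fin, Fintype.card_fin] at this
      exact this
    have hkn' : k = n := le_antisymm hkle (by omega)
    have hcard : Fintype.card (Fin k) = Module.finrank ℝ E := by
      rw [Fintype.card_fin, finrank_euclideanSpace_fin, hkn']
    haveI : Nonempty (Fin k) := ⟨⟨0, hk1⟩⟩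
    have hspan : Submodule.span ℝ (Set.range f) = ⊤ :=
      hf.linearIndependent.span_eq_top_of_card_eq_finrank hcard
    have hsub : {r : E | ∀ i, ⟪f i, r⟫ = 0} ⊆ {(0 : E)} := by
      intro r hr
      have hall : ∀ w : E, ⟪w, r⟫ = 0 := by
        intro w
        have hw : w ∈ Submodule.span ℝ (Set.range f) := by rw [hspan]; trivial
        induction hw using Submodule.span_induction with
        | mem x hx => obtain ⟨i, rfl⟩ := hx; exact hr i
        | zero => simp
        | add x y _ _ hx hy => rw [inner_add_left, hx, hy, add_zero]
        | smul c x _ hx => rw [real_inner_smul_left, hx, mul_zero]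
      have : r = 0 := by
        have := hall r
        exact inner_self_eq_zero.mp this
      simp [this]
    have h0 : μ {(0 : E)} = 0 := by
      have hcl : MeasurableSet (Metric.sphere (0 : E) 1) :=
        (Metric.isClosed_sphere).measurableSet
      have hc : μ (Metric.sphere (0 : E) 1)ᶜ = 0 := by
        rw [measure_compl hcl (measure_ne_top μ _), hsph, measure_univ]
        simp
      refine measure_mono_null ?_ hc
      intro x hx
      simp only [Set.mem_singleton_iff] at hx
      subst hx
      simp [Metric.mem_sphere]
    exact measure_mono_null hsub h0
  | succ m IH =>
    intro k hk1 hkn f hf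
    by_cases hle : n ≤ k + m
    · exact IH k hk1 hle f hf
    -- k < n; extend with an orthogonal unit vector u
    have hkltn : k < n := by omega
    have hfi : LinearIndependent ℝ f := hf.linearIndependent
    have hspanne : Submodule.span ℝ (Set.range f) ≠ ⊤ := by
      intro hsp
      have := finrank_span_eq_card hfi
      rw [hsp] at this
      simp [finrank_euclideanSpace_fin] at this
      omega
    have hbot : (Submodule.span ℝ (Set.range f))ᗮ ≠ ⊥ := by
      intro h
      exact hspanne ((Submodule.orthogonal_eq_bot_iff).mp h)
    obtain ⟨u', hu'mem, hu'ne⟩ := Submodule.ne_bot_iff _ |>.mp hbot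
    set u : E := ‖u'‖⁻¹ • u' with hu_def
    have hu : ‖u‖ = 1 := norm_smul_inv_norm hu'ne
    have hufi : ∀ i, ⟪f i, u⟫ = 0 := by
      intro i
      have : ⟪f i, u'⟫ = 0 :=
        (Submodule.mem_orthogonal _ u').mp hu'mem (f i)
          (Submodule.subset_span (Set.mem_range_self i))
      rw [hu_def, real_inner_smul_right, this, mul_zero]
    have hfu : ∀ i, ⟪u, f i⟫ = 0 := fun i => by rw [real_inner_comm]; exact hufi i
    have huu : ⟪u, u⟫ = 1 := inner_self_one hu
    set g : Fin (k + 1) → E := Fin.snoc f u with hg_def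
    have hg : Orthonormal ℝ g := by
      rw [orthonormal_iff_ite]
      have hf' := orthonormal_iff_ite.mp hf
      intro i j
      induction i using Fin.lastCases with
      | last =>
        induction j using Fin.lastCases with
        | last => simp [hg_def, huu, hu]
        | cast j => simp [hg_def, hfu j, (Fin.castSucc_lt_last j).ne']
      | cast i =>
        induction j using Fin.lastCases with
        | last => simp [hg_def, hufi i, (Fin.castSucc_lt_last i).ne]
        | cast j => simpa [hg_def, Fin.castSucc_inj] using hf' i j
    set i0 : Fin k := ⟨0, hk1⟩ with hi0_def
    set a : E := f i0 with ha_def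
    have ha : ‖a‖ = 1 := hf.1 i0
    have hab : ⟪a, u⟫ = 0 := hufi i0
    set vt : ℝ → E := fun t => Real.cos t • a + Real.sin t • u with hvt_def
    set A : ℝ → Set E := fun t =>
      {r : E | ⟪vt t, r⟫ = 0} ∩ ⋂ (i : Fin k), ⋂ (_ : i ≠ i0), {r : E | ⟪f i, r⟫ = 0}
      with hA_def
    have hAmem : ∀ t r, r ∈ A t ↔ (⟪vt t, r⟫ = 0 ∧ ∀ i, i ≠ i0 → ⟪f i, r⟫ = 0) := by
      intro t r
      simp [hA_def, Set.mem_iInter]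
    have hAmeas : ∀ t, MeasurableSet (A t) := by
      intro t
      exact (meas_inner_zero _).inter
        (MeasurableSet.iInter fun i => MeasurableSet.iInter fun _ => meas_inner_zero _)
    have hA0 : A 0 = {r : E | ∀ i, ⟪f i, r⟫ = 0} := by
      ext r
      rw [hAmem]
      have hvt0 : vt 0 = a := by simp [hvt_def]
      rw [hvt0]
      constructor
      · rintro ⟨h0, hrest⟩ i
        by_cases hi : i = i0
        · rw [hi]; exact h0
        · exact hrest i hi
      · intro h
        exact ⟨h i0, fun i _ => h i⟩
    have hAt : ∀ t, μ (A t) = μ (A 0) := by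
      intro t
      set T := rotIso ha hu hab t with hT_def
      have hTmeas : Measurable T := T.continuous.measurable
      have hkey : ∀ (x r : E), ⟪x, T r⟫ = ⟪T.symm x, r⟫ := by
        intro x r
        conv_lhs => rw [← T.apply_symm_apply x]
        exact T.inner_map_map (T.symm x) r
      have hsymm_vt : T.symm (vt t) = a := by
        have h := Real.sin_sq_add_cos_sq t
        rw [hT_def, rotIso_symm_apply, hvt_def]
        simp only [rotAux_smul, rotAux_add, rotAux_a_eq ha hab, rotAux_b_eq hu hab,
          Real.cos_neg, Real.sin_neg]
        match_scalars
        · linear_combination h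
        · ring
      have hsymm_fi : ∀ i, i ≠ i0 → T.symm (f i) = f i := by
        intro i hi
        rw [hT_def, rotIso_symm_apply]
        exact rotAux_fixed (-t) (hf.2 (Ne.symm hi)) (hfu i)
      have hpre : T ⁻¹' (A t) = A 0 := by
        ext r
        rw [Set.mem_preimage, hAmem, hAmem]
        have hvt0 : vt 0 = a := by simp [hvt_def]
        rw [hvt0, hkey (vt t) r, hsymm_vt]
        constructor
        · rintro ⟨h0, hrest⟩
          refine ⟨h0, fun i hi => ?_⟩
          have := hrest i hi
          rwa [hkey (f i) r, hsymm_fi i hi] at this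
        · rintro ⟨h0, hrest⟩
          refine ⟨h0, fun i hi => ?_⟩
          rw [hkey (f i) r, hsymm_fi i hi]
          exact hrest i hi
      calc μ (A t) = Measure.map T μ (A t) := by rw [hinv T]
        _ = μ (T ⁻¹' (A t)) := Measure.map_apply hTmeas (hAmeas t)
        _ = μ (A 0) := by rw [hpre]
    set B : Set E := {r : E | ∀ i, ⟪g i, r⟫ = 0} with hB_def
    have hB : μ B = 0 := IH (k + 1) (by omega) (by omega) g hg
    have hBmeas : MeasurableSet B := by
      have : B = ⋂ (i : Fin (k + 1)), {r : E | ⟪g i, r⟫ = 0} := by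
        ext r; simp [hB_def, Set.mem_iInter]
      rw [this]
      exact MeasurableSet.iInter fun i => meas_inner_zero _
    have hinter : ∀ t s, t ∈ Set.Ioo 0 π → s ∈ Set.Ioo 0 π → t ≠ s →
        A t ∩ A s ⊆ B := by
      rintro t s ht hs hts r ⟨hrt, hrs⟩
      rw [hAmem] at hrt hrs
      obtain ⟨h1, hrest⟩ := hrt
      obtain ⟨h2, -⟩ := hrs
      rw [hvt_def] at h1 h2
      simp only [inner_add_left, real_inner_smul_left] at h1 h2
      have hts' : Real.sin (t - s) ≠ 0 := by
        intro h
        have hlb : -π < t - s := by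
          obtain ⟨ht1, ht2⟩ := ht; obtain ⟨hs1, hs2⟩ := hs; linarith
        have hub : t - s < π := by
          obtain ⟨ht1, ht2⟩ := ht; obtain ⟨hs1, hs2⟩ := hs; linarith
        exact sub_ne_zero.mpr hts ((Real.sin_eq_zero_iff_of_lt_of_lt hlb hub).mp h)
      have h3 : Real.sin (t - s) * ⟪a, r⟫ = 0 := by
        rw [Real.sin_sub]
        linear_combination (-Real.sin s) * h1 + Real.sin t * h2
      have hX : ⟪a, r⟫ = 0 := (mul_eq_zero.mp h3).resolve_left hts'
      have hY : ⟪u, r⟫ = 0 := by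
        have hst : Real.sin t ≠ 0 := (Real.sin_pos_of_pos_of_lt_pi ht.1 ht.2).ne'
        have : Real.sin t * ⟪u, r⟫ = 0 := by linear_combination h1 - Real.cos t * hX
        exact (mul_eq_zero.mp this).resolve_left hst
      intro i
      induction i using Fin.lastCases with
      | last => simpa [hg_def] using hY
      | cast i =>
        simp only [hg_def, Fin.snoc_castSucc]
        by_cases hi : i = i0
        · rw [hi, ← ha_def]; exact hX
        · exact hrest i hi
    have key : μ (A 0) = 0 := by
      by_contra hδ
      set tt : ℕ → ℝ := fun j => π / (j + 2) with htt_def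
      have htt_mem : ∀ j, tt j ∈ Set.Ioo 0 π := by
        intro j
        constructor
        · positivity
        · rw [htt_def]
          apply div_lt_self Real.pi_pos
          have : (0:ℝ) ≤ (j : ℝ) := Nat.cast_nonneg j
          linarith
      have htt_inj : Function.Injective tt := by
        intro i j h
        rw [htt_def] at h
        have hi : ((i:ℝ) + 2) ≠ 0 := by positivity
        have hj : ((j:ℝ) + 2) ≠ 0 := by positivity
        rw [div_eq_div_iff (by positivity) (by positivity)] at h
        have := mul_left_cancel₀ Real.pi_ne_zero h
        have : (i : ℝ) = (j : ℝ) := by linarith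
        exact_mod_cast this
      set C : ℕ → Set E := fun j => A (tt j) \ B with hC_def
      have hCmeas : ∀ j, MeasurableSet (C j) := fun j => (hAmeas _).diff hBmeas
      have hCμ : ∀ j, μ (C j) = μ (A 0) := by
        intro j
        rw [hC_def]
        simp only
        rw [measure_diff_null hB, hAt]
      have hdisj : Pairwise (Function.onFun Disjoint C) := by
        intro i j hij
        rw [Function.onFun, Set.disjoint_left]
        intro x hxi hxj
        have hx : x ∈ B := hinter (tt i) (tt j) (htt_mem i) (htt_mem j)
          (fun hh => hij (htt_inj hh)) ⟨hxi.1, hxj.1⟩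
        exact hxj.2 hx
      have hle : μ (⋃ j, C j) ≤ 1 := prob_le_one
      rw [measure_iUnion hdisj hCmeas] at hle
      simp only [hCμ] at hle
      rw [ENNReal.tsum_const_eq_top_of_ne_zero hδ] at hle
      simp at hle
    rw [← hA0]
    exact key

end NullB

lemma sgn_ne_iff {x y : ℝ} : sgn x ≠ sgn y ↔ ¬(0 ≤ x ↔ 0 ≤ y) := by
  unfold sgn
  by_cases hx : 0 ≤ x <;> by_cases hy : 0 ≤ y <;> simp [hx, hy] <;> norm_num

lemma sgn_mul_pos {p x : ℝ} (hp : 0 < p) : sgn (p * x) = sgn x := by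
  unfold sgn
  by_cases hx : 0 ≤ x
  · simp [hx, mul_nonneg hp.le hx]
  · have : ¬ (0 ≤ p * x) := by
      push_neg at hx ⊢
      exact mul_neg_of_pos_of_neg hp hx
    simp [hx, this]

lemma sgn_neg_ne_iff (x : ℝ) : (sgn x ≠ sgn (-x)) ↔ ¬ (x = 0) := by
  rcases lt_trichotomy x 0 with h | h | h
  · simp only [sgn, if_neg (not_le.mpr h), if_pos (by linarith : (0:ℝ) ≤ -x)]
    constructor
    · intro _; exact h.ne
    · intro _; norm_num
  · subst h; simp [sgn]
  · simp only [sgn, if_pos h.le, if_neg (not_le.mpr (by linarith : -x < 0))]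
    constructor
    · intro _; exact h.ne'
    · intro _; norm_num

lemma measurable_sgn : Measurable sgn := by
  unfold sgn
  exact Measurable.ite (measurableSet_le measurable_const measurable_id)
    measurable_const measurable_const

lemma arcs_measure {θ : ℝ} (hθ1 : 0 < θ) (hθ2 : θ < π) :
    volume ({α : ℝ | sgn (Real.cos α) ≠ sgn (Real.cos (α - θ))} ∩
      Set.Ioc (-(π/2)) (-(π/2) + 2*π)) = ENNReal.ofReal (2*θ) := by
  have hπ := Real.pi_pos
  set S : Set ℝ := {α : ℝ | sgn (Real.cos α) ≠ sgn (Real.cos (α - θ))} with hS_def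
  set I : Set ℝ := Set.Ioc (-(π/2)) (-(π/2) + 2*π) with hI_def
  set Fs : Set ℝ := {-(π/2), π/2, 3*π/2, θ - π/2, θ + π/2} with hFs_def
  have hFnull : volume Fs = 0 := (Set.toFinite Fs).measure_zero _
  set U : Set ℝ := Set.Ioo (-(π/2)) (θ - π/2) ∪ Set.Ioo (π/2) (θ + π/2) with hU_def
  have hkey : (S ∩ I) \ Fs = U \ Fs := by
    ext α
    simp only [hS_def, hI_def, hFs_def, hU_def, Set.mem_diff, Set.mem_inter_iff,
      Set.mem_union, Set.mem_Ioo, Set.mem_Ioc, Set.mem_setOf_eq, Set.mem_insert_iff,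
      Set.mem_singleton_iff]
    constructor
    · rintro ⟨⟨hS, hI1, hI2⟩, hF⟩
      refine ⟨?_, hF⟩
      push_neg at hF
      obtain ⟨hF1, hF2, hF3, hF4, hF5⟩ := hF
      rw [sgn_ne_iff] at hS
      rcases lt_trichotomy α (π/2) with h1 | h1 | h1
      · have hpos : 0 < Real.cos α := Real.cos_pos_of_mem_Ioo ⟨hI1, h1⟩
        have hneg : ¬ (0 ≤ Real.cos (α - θ)) := fun h => hS ⟨fun _ => h, fun _ => hpos.le⟩
        left
        refine ⟨hI1, ?_⟩
        by_contra hge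
        push_neg at hge
        have hgt : θ - π/2 < α := lt_of_le_of_ne hge (Ne.symm hF4)
        exact hneg (Real.cos_pos_of_mem_Ioo ⟨by linarith, by linarith⟩).le
      · exact absurd h1 hF2
      · have hneg : Real.cos α < 0 := by
          apply Real.cos_neg_of_pi_div_two_lt_of_lt h1
          have : α < 3*π/2 := lt_of_le_of_ne (by linarith) hF3
          linarith
        have hpos' : 0 ≤ Real.cos (α - θ) := by
          by_contra hn
          exact hS ⟨fun h => absurd h (not_le.mpr hneg), fun h => absurd h hn⟩
        right
        refine ⟨h1, ?_⟩
        by_contra hge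
        push_neg at hge
        have hgt : θ + π/2 < α := lt_of_le_of_ne hge (Ne.symm hF5)
        have : Real.cos (α - θ) < 0 := by
          apply Real.cos_neg_of_pi_div_two_lt_of_lt (by linarith)
          linarith
        linarith
    · rintro ⟨hU, hF⟩
      refine ⟨⟨?_, ?_, ?_⟩, hF⟩
      · rw [sgn_ne_iff]
        rcases hU with ⟨h1, h2⟩ | ⟨h1, h2⟩
        · have hpos : 0 < Real.cos α := Real.cos_pos_of_mem_Ioo ⟨h1, by linarith⟩
          have hneg : Real.cos (α - θ) < 0 := by
            rw [← neg_sub, Real.cos_neg]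
            apply Real.cos_neg_of_pi_div_two_lt_of_lt (by linarith) (by linarith)
          intro hiff
          exact absurd (hiff.mp hpos.le) (not_le.mpr hneg)
        · have hneg : Real.cos α < 0 :=
            Real.cos_neg_of_pi_div_two_lt_of_lt h1 (by linarith)
          have hpos : 0 < Real.cos (α - θ) :=
            Real.cos_pos_of_mem_Ioo ⟨by linarith, by linarith⟩
          intro hiff
          exact absurd (hiff.mpr hpos.le) (not_le.mpr hneg)
      · rcases hU with ⟨h1, h2⟩ | ⟨h1, h2⟩ <;> linarith
      · rcases hU with ⟨h1, h2⟩ | ⟨h1, h2⟩ <;> linarith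
  have hvol : volume (S ∩ I) = volume U := by
    rw [← measure_diff_null (s := S ∩ I) hFnull, hkey, measure_diff_null hFnull]
  rw [hvol, hU_def]
  have hdisj : Disjoint (Set.Ioo (-(π/2)) (θ - π/2)) (Set.Ioo (π/2) (θ + π/2)) := by
    rw [Set.disjoint_left]
    rintro x ⟨hx1, hx2⟩ ⟨hy1, hy2⟩
    linarith
  rw [measure_union hdisj measurableSet_Ioo, Real.volume_Ioo, Real.volume_Ioo,
    ← ENNReal.ofReal_add (by linarith) (by linarith)]
  congr 1
  ring

/-- For `r` uniformly distributed on the unit sphere of `ℝⁿ` (`n ≥ 2`), i.e. `μ` a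
probability measure giving full mass to the unit sphere and invariant under every
linear isometry, and fixed unit vectors `v, w` at angle `θ`,
`Pr(sgn⟪v,r⟫ ≠ sgn⟪w,r⟫) = θ / π`. -/
theorem stmt_0 (n : ℕ) (hn : 2 ≤ n)
    (μ : Measure (EuclideanSpace ℝ (Fin n))) [IsProbabilityMeasure μ]
    (hsph : μ (Metric.sphere (0 : EuclideanSpace ℝ (Fin n)) 1) = 1)
    (hinv : ∀ T : EuclideanSpace ℝ (Fin n) ≃ₗᵢ[ℝ] EuclideanSpace ℝ (Fin n),
      Measure.map T μ = μ)
    (v w : EuclideanSpace ℝ (Fin n)) (hv : ‖v‖ = 1) (hw : ‖w‖ = 1)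
    (θ : ℝ) (hθ : θ = Real.arccos ⟪v, w⟫) :
    μ {r | sgn ⟪v, r⟫ ≠ sgn ⟪w, r⟫} = ENNReal.ofReal (θ / π) := by
  classical
  have hπ := Real.pi_pos
  have hb : |⟪v, w⟫| ≤ 1 := by
    have h := abs_real_inner_le_norm v w
    rw [hv, hw] at h
    simpa using h
  have hge : -1 ≤ ⟪v, w⟫ := (abs_le.mp hb).1
  have hle : ⟪v, w⟫ ≤ 1 := (abs_le.mp hb).2
  rcases eq_or_lt_of_le hle with heq1 | hlt1
  · -- v = w, event empty
    have hvw : v = w := by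
      have h2 : ‖v - w‖ ^ 2 = 0 := by
        rw [norm_sub_sq_real, hv, hw, heq1]; norm_num
      have h3 : ‖v - w‖ = 0 := by
        have := pow_eq_zero_iff (n := 2) (by norm_num) |>.mp h2
        exact this
      exact sub_eq_zero.mp (norm_eq_zero.mp h3)
    have hempty : {r : EuclideanSpace ℝ (Fin n) | sgn ⟪v, r⟫ ≠ sgn ⟪w, r⟫} = ∅ := by
      ext r; simp [hvw]
    rw [hempty, hθ, heq1, Real.arccos_one]
    simp
  rcases eq_or_lt_of_le hge with heq2 | hgt
  · -- w = -v
    have hwv : w = -v := by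
      have h2 : ‖v + w‖ ^ 2 = 0 := by
        rw [norm_add_sq_real, hv, hw, ← heq2]; ring
      have h3 : ‖v + w‖ = 0 := by
        have := pow_eq_zero_iff (n := 2) (by norm_num) |>.mp h2
        exact this
      have := add_eq_zero_iff_eq_neg.mp (norm_eq_zero.mp h3)
      rw [this]; simp
    have hevset : {r : EuclideanSpace ℝ (Fin n) | sgn ⟪v, r⟫ ≠ sgn ⟪w, r⟫} =
        {r : EuclideanSpace ℝ (Fin n) | ⟪v, r⟫ = 0}ᶜ := by
      ext r
      simp only [Set.mem_setOf_eq, Set.mem_compl_iff, hwv, inner_neg_left]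
      exact sgn_neg_ne_iff _
    have hON1 : Orthonormal ℝ ![v] := by
      rw [orthonormal_iff_ite]
      intro i j
      fin_cases i <;> fin_cases j <;> simp [inner_self_one hv, hv]
    have hnull : μ {r : EuclideanSpace ℝ (Fin n) | ⟪v, r⟫ = 0} = 0 := by
      have := null_orth μ hsph hinv n 1 (by norm_num) (by omega) ![v] hON1
      have hset : {r : EuclideanSpace ℝ (Fin n) | ∀ i : Fin 1, ⟪![v] i, r⟫ = 0} =
          {r : EuclideanSpace ℝ (Fin n) | ⟪v, r⟫ = 0} := by
        ext r; simp [Fin.forall_fin_one]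
      rwa [hset] at this
    rw [hevset, measure_compl (meas_inner_zero v) (measure_ne_top μ _), hnull, measure_univ]
    rw [hθ, ← heq2, Real.arccos_neg_one, div_self Real.pi_ne_zero]
    simp
  -- main case : -1 < ⟪v,w⟫ < 1
  have hθpos : 0 < θ := by rw [hθ]; exact Real.arccos_pos.mpr hlt1
  have hθlt : θ < π := by
    rw [hθ]
    refine lt_of_le_of_ne (Real.arccos_le_pi _) ?_
    rw [Ne, Real.arccos_eq_pi]
    push_neg
    linarith
  have hcosθ : Real.cos θ = ⟪v, w⟫ := by rw [hθ]; exact Real.cos_arccos hge hle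
  have hsinθ : 0 < Real.sin θ := Real.sin_pos_of_pos_of_lt_pi hθpos hθlt
  set u : EuclideanSpace ℝ (Fin n) := (Real.sin θ)⁻¹ • (w - Real.cos θ • v) with hu_def
  have hwv_norm : ‖w - Real.cos θ • v‖ = Real.sin θ := by
    have h2 : ‖w - Real.cos θ • v‖ ^ 2 = Real.sin θ ^ 2 := by
      have hcomm : ⟪w, v⟫ = Real.cos θ := by rw [real_inner_comm, ← hcosθ]
      rw [norm_sub_sq_real, real_inner_smul_right, hcomm, norm_smul, hv, hw, Real.sin_sq,
        Real.norm_eq_abs, mul_one, sq_abs]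
      ring
    rw [← Real.sqrt_sq (norm_nonneg _), h2, Real.sqrt_sq hsinθ.le]
  have hu_norm : ‖u‖ = 1 := by
    rw [hu_def, norm_smul, hwv_norm, Real.norm_eq_abs, abs_inv, abs_of_pos hsinθ]
    field_simp
  have hvu : ⟪v, u⟫ = 0 := by
    rw [hu_def, real_inner_smul_right, inner_sub_right, real_inner_smul_right,
      inner_self_one hv, ← hcosθ]
    ring
  have hw_dec : ∀ r, ⟪w, r⟫ = Real.cos θ * ⟪v, r⟫ + Real.sin θ * ⟪u, r⟫ := by
    intro r
    have hww : w = Real.cos θ • v + Real.sin θ • u := by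
      rw [hu_def, smul_smul, mul_inv_cancel₀ hsinθ.ne', one_smul]
      abel
    conv_lhs => rw [hww]
    rw [inner_add_left, real_inner_smul_left, real_inner_smul_left]
  have huv : ⟪u, v⟫ = 0 := by rw [real_inner_comm]; exact hvu
  have hON : Orthonormal ℝ ![v, u] := by
    rw [orthonormal_iff_ite]
    intro i j
    fin_cases i <;> fin_cases j <;>
      simp [inner_self_one hv, inner_self_one hu_norm, hvu, huv, hu_norm, hv]
  set z : EuclideanSpace ℝ (Fin n) → ℂ :=
    fun r => ((⟪v, r⟫ : ℝ) : ℂ) + ((⟪u, r⟫ : ℝ) : ℂ) * Complex.I with hz_def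
  have hz_re : ∀ r, (z r).re = ⟪v, r⟫ := by intro r; simp [hz_def]
  have hz_im : ∀ r, (z r).im = ⟪u, r⟫ := by intro r; simp [hz_def]
  have hz_cont : Continuous z := by
    apply Continuous.add
    · exact Complex.continuous_ofReal.comp (Continuous.inner continuous_const continuous_id)
    · exact (Complex.continuous_ofReal.comp
        (Continuous.inner continuous_const continuous_id)).mul continuous_const
  haveI : Fact (0 < 2 * π) := ⟨by positivity⟩
  set ψ : EuclideanSpace ℝ (Fin n) → AddCircle (2 * π) :=
    fun r => ((z r).arg : AddCircle (2 * π)) with hψ_def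
  have hψ_meas : Measurable ψ :=
    AddCircle.measurable_mk'.comp (Complex.measurable_arg.comp hz_cont.measurable)
  set Z : Set (EuclideanSpace ℝ (Fin n)) := {r | z r = 0} with hZ_def
  have hZ : μ Z = 0 := by
    have hzero : ∀ r : EuclideanSpace ℝ (Fin n), z r = 0 ↔ (⟪v, r⟫ = 0 ∧ ⟪u, r⟫ = 0) := by
      intro r
      rw [Complex.ext_iff, Complex.zero_re, Complex.zero_im, hz_re, hz_im]
    have hZeq : Z = {r : EuclideanSpace ℝ (Fin n) | ∀ i : Fin 2, ⟪![v, u] i, r⟫ = 0} := by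
      ext r
      simp only [hZ_def, Set.mem_setOf_eq]
      rw [hzero r]
      constructor
      · rintro ⟨h1, h2⟩ i
        fin_cases i
        · exact h1
        · exact h2
      · intro h
        exact ⟨h 0, h 1⟩
    rw [hZeq]
    exact null_orth μ hsph hinv n 2 (by norm_num) (by omega) ![v, u] hON
  set ν : Measure (AddCircle (2 * π)) := Measure.map ψ μ with hν_def
  haveI : IsProbabilityMeasure ν := Measure.isProbabilityMeasure_map hψ_meas.aemeasurable
  have hz_rot : ∀ (t : ℝ) (r : EuclideanSpace ℝ (Fin n)),
      z (rotIso hv hu_norm hvu t r) = Complex.exp ((t : ℂ) * Complex.I) * z r := by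
    intro t r
    have h1 : ⟪v, rotIso hv hu_norm hvu t r⟫ =
        Real.cos t * ⟪v, r⟫ - Real.sin t * ⟪u, r⟫ := inner_rotAux_a hv hvu t r
    have h2 : ⟪u, rotIso hv hu_norm hvu t r⟫ =
        Real.sin t * ⟪v, r⟫ + Real.cos t * ⟪u, r⟫ := inner_rotAux_b hu_norm hvu t r
    simp only [hz_def]
    rw [h1, h2, Complex.exp_mul_I]
    push_cast
    linear_combination (-(Complex.sin (t : ℂ) * ((⟪u, r⟫ : ℝ) : ℂ))) * Complex.I_sq
  have hν_inv : ∀ c : AddCircle (2 * π), Measure.map (c + ·) ν = ν := by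
    intro c
    obtain ⟨t, rfl⟩ := QuotientAddGroup.mk_surjective c
    set T := rotIso hv hu_norm hvu t with hT_def
    have hT_meas : Measurable T := T.continuous.measurable
    have hae : (fun r => ((t : ℝ) : AddCircle (2 * π)) + ψ r) =ᵐ[μ] (fun r => ψ (T r)) := by
      filter_upwards [measure_eq_zero_iff_ae_notMem.mp hZ] with r hr
      have hzr : z r ≠ 0 := hr
      have hexp : Complex.exp ((t : ℂ) * Complex.I) ≠ 0 := Complex.exp_ne_zero _
      have h1 : ((z (T r)).arg : Real.Angle) =
          ((Complex.exp ((t : ℂ) * Complex.I)).arg : Real.Angle) + ((z r).arg : Real.Angle) := by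
        rw [hT_def, hz_rot t r]
        exact Complex.arg_mul_coe_angle hexp hzr
      have h2 : ((Complex.exp ((t : ℂ) * Complex.I)).arg : Real.Angle) = ((t : ℝ) : Real.Angle) := by
        rw [Complex.exp_mul_I, ← Complex.ofReal_cos, ← Complex.ofReal_sin]
        have h3 := Complex.arg_cos_add_sin_mul_I_coe_angle ((t : ℝ) : Real.Angle)
        rw [Real.Angle.cos_coe, Real.Angle.sin_coe] at h3
        exact h3
      have h4 : ((z (T r)).arg : Real.Angle) = ((t : ℝ) : Real.Angle) + ((z r).arg : Real.Angle) := by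
        rw [h1, h2]
      exact h4.symm
    calc Measure.map (fun x => (↑t : AddCircle (2 * π)) + x) ν
        = Measure.map ((fun x => (↑t : AddCircle (2 * π)) + x) ∘ ψ) μ := by
          rw [hν_def, Measure.map_map (measurable_const_add _) hψ_meas]
      _ = Measure.map (fun r => ψ (T r)) μ := Measure.map_congr hae
      _ = Measure.map ψ (Measure.map T μ) := by
          rw [Measure.map_map hψ_meas hT_meas]; rfl
      _ = ν := by rw [hinv T, hν_def]
  haveI : ν.IsAddLeftInvariant := ⟨hν_inv⟩
  have hν_eq := Measure.isAddLeftInvariant_eq_smul ν (volume : Measure (AddCircle (2 * π)))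
  set S : Set ℝ := {α | sgn (Real.cos α) ≠ sgn (Real.cos (α - θ))} with hS_def
  have hS_meas : MeasurableSet S := by
    have h1 : MeasurableSet {α : ℝ | sgn (Real.cos α) = sgn (Real.cos (α - θ))} :=
      measurableSet_eq_fun (measurable_sgn.comp Real.continuous_cos.measurable)
        (measurable_sgn.comp
          (Real.continuous_cos.comp (continuous_id.sub continuous_const)).measurable)
    exact h1.compl
  set A : Set (AddCircle (2 * π)) := (fun α : ℝ => (α : AddCircle (2 * π))) '' S with hA_def
  have hpreA : (fun α : ℝ => (α : AddCircle (2 * π))) ⁻¹' A = S := by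
    ext α
    simp only [hA_def, Set.mem_preimage, Set.mem_image]
    constructor
    · rintro ⟨s, hs, heq⟩
      have hmem : s - α ∈ AddSubgroup.zmultiples (2 * π) :=
        QuotientAddGroup.eq_iff_sub_mem.mp heq
      obtain ⟨k, hk⟩ := AddSubgroup.mem_zmultiples_iff.mp hmem
      have hs_eq : s = α + (k : ℝ) * (2 * π) := by
        rw [zsmul_eq_mul] at hk
        linarith [hk]
      rw [hs_eq] at hs
      rw [hS_def, Set.mem_setOf_eq] at hs ⊢
      rw [Real.cos_add_int_mul_two_pi] at hs
      have hsub : α + (k : ℝ) * (2 * π) - θ = (α - θ) + (k : ℝ) * (2 * π) := by ring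
      rw [hsub, Real.cos_add_int_mul_two_pi] at hs
      exact hs
    · intro hα; exact ⟨α, hα, rfl⟩
  have hA_meas : MeasurableSet A := by
    have h1 : MeasurableSet ((fun α : ℝ => (α : AddCircle (2 * π))) ⁻¹' A) := hpreA ▸ hS_meas
    exact h1
  have hEv_ae : {r : EuclideanSpace ℝ (Fin n) | sgn ⟪v, r⟫ ≠ sgn ⟪w, r⟫} =ᵐ[μ] ψ ⁻¹' A := by
    rw [Filter.eventuallyEq_set]
    filter_upwards [measure_eq_zero_iff_ae_notMem.mp hZ] with r hr
    have hzr : z r ≠ 0 := hr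
    have habs : 0 < ‖z r‖ := norm_pos_iff.mpr hzr
    have hre : ⟪v, r⟫ = ‖z r‖ * Real.cos ((z r).arg) := by
      rw [Complex.cos_arg hzr]
      have h5 : ‖z r‖ * ((z r).re / ‖z r‖) = (z r).re := by
        field_simp
      rw [h5, hz_re]
    have him : ⟪u, r⟫ = ‖z r‖ * Real.sin ((z r).arg) := by
      rw [Complex.sin_arg]
      have h5 : ‖z r‖ * ((z r).im / ‖z r‖) = (z r).im := by
        field_simp
      rw [h5, hz_im]
    have hwr : ⟪w, r⟫ = ‖z r‖ * Real.cos ((z r).arg - θ) := by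
      rw [hw_dec r, hre, him, Real.cos_sub]; ring
    simp only [Set.mem_setOf_eq, Set.mem_preimage]
    rw [hre, hwr, sgn_mul_pos habs, sgn_mul_pos habs]
    have hmem : ψ r ∈ A ↔ (z r).arg ∈ S := by
      rw [← hpreA]; exact Iff.rfl
    rw [hmem, hS_def]
    exact Iff.rfl
  have hEvμ : μ {r : EuclideanSpace ℝ (Fin n) | sgn ⟪v, r⟫ ≠ sgn ⟪w, r⟫} = ν A := by
    rw [measure_congr hEv_ae, hν_def, Measure.map_apply hψ_meas hA_meas]
  have hvolA : volume A = ENNReal.ofReal (2 * θ) := by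
    rw [AddCircle.add_projection_respects_measure (T := 2 * π) (-(π/2)) hA_meas]
    have hpre' : (QuotientAddGroup.mk ⁻¹' A : Set ℝ) = S := hpreA
    rw [hpre']
    exact arcs_measure hθpos hθlt
  have h2π0 : ENNReal.ofReal (2 * π) ≠ 0 := by
    simp only [ne_eq, ENNReal.ofReal_eq_zero, not_le]
    positivity
  have h2πt : ENNReal.ofReal (2 * π) ≠ ⊤ := ENNReal.ofReal_ne_top
  set c : ℝ≥0 := Measure.addHaarScalarFactor ν (volume : Measure (AddCircle (2 * π))) with hc_def
  have huniv : (c : ℝ≥0∞) * ENNReal.ofReal (2 * π) = 1 := by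
    have h1 : ν Set.univ = 1 := measure_univ
    rw [hν_eq, Measure.smul_apply, AddCircle.measure_univ, ENNReal.smul_def, smul_eq_mul] at h1
    exact h1
  have hc' : (c : ℝ≥0∞) = (ENNReal.ofReal (2 * π))⁻¹ := by
    calc (c : ℝ≥0∞) = (c : ℝ≥0∞) * (ENNReal.ofReal (2 * π) * (ENNReal.ofReal (2 * π))⁻¹) := by
          rw [ENNReal.mul_inv_cancel h2π0 h2πt, mul_one]
      _ = ((c : ℝ≥0∞) * ENNReal.ofReal (2 * π)) * (ENNReal.ofReal (2 * π))⁻¹ := by ring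
      _ = (ENNReal.ofReal (2 * π))⁻¹ := by rw [huniv, one_mul]
  rw [hEvμ, hν_eq, Measure.smul_apply, hvolA, ENNReal.smul_def, smul_eq_mul, hc']
  rw [← ENNReal.div_eq_inv_mul, ← ENNReal.ofReal_div_of_pos (by positivity)]
  congr 1
  field_simp
end

section
/- For all θ with 0 < θ ≤ π, the inequality 2θ/(π(1 - cos θ)) > 0.878 holds. -/
open Real


private lemma pos_of_deriv (f f' : ℝ → ℝ) (hd : ∀ x, HasDerivAt f (f' x) x)
    (h0 : f 0 = 0) (h' : ∀ x, 0 ≤ x → 0 ≤ f' x) : ∀ x, 0 ≤ x → 0 ≤ f x := by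
  intro x hx
  have hmono : MonotoneOn f (Set.Ici (0:ℝ)) := by
    apply monotoneOn_of_deriv_nonneg (convex_Ici 0)
    · exact fun y _ => ((hd y).continuousAt).continuousWithinAt
    · exact fun y _ => ((hd y).differentiableAt).differentiableWithinAt
    · intro y hy
      rw [(hd y).deriv]
      exact h' y (le_of_lt (by simpa using hy))
  have := hmono (Set.self_mem_Ici) (Set.mem_Ici.2 hx) hx
  linarith [this, h0.symm ▸ this]

private lemma sin_lb3 (x : ℝ) (hx : 0 ≤ x) : x - x^3/6 ≤ Real.sin x := by
  have := pos_of_deriv (fun x => Real.sin x - (x - x^3/6))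
      (fun x => Real.cos x - (1 - x^2/2))
      (fun x => by
        have h2 : HasDerivAt (fun x:ℝ => x - x^3/6) (1 - x^2/2) x := by
          have := (hasDerivAt_id x).sub ((hasDerivAt_pow 3 x).div_const 6)
          exact this.congr_deriv (by norm_num; try ring)
        exact (Real.hasDerivAt_sin x).sub h2)
      (by norm_num)
      (fun y _ => by have := Real.one_sub_sq_div_two_le_cos (x := y); linarith)
      x hx
  simpa using this

private lemma cos_ub4 (x : ℝ) (hx : 0 ≤ x) : Real.cos x ≤ 1 - x^2/2 + x^4/24 := by
  have := pos_of_deriv (fun x => (1 - x^2/2 + x^4/24) - Real.cos x)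
      (fun x => (-x + x^3/6) + Real.sin x)
      (fun x => by
        have h2 : HasDerivAt (fun x:ℝ => 1 - x^2/2 + x^4/24) (-x + x^3/6) x := by
          have := (((hasDerivAt_const x (1:ℝ)).sub ((hasDerivAt_pow 2 x).div_const 2)).add
            ((hasDerivAt_pow 4 x).div_const 24))
          exact this.congr_deriv (by norm_num; try ring)
        exact (h2.sub (Real.hasDerivAt_cos x)).congr_deriv (by ring))
      (by norm_num)
      (fun y hy => by have := sin_lb3 y hy; linarith)
      x hx
  simpa using this

private lemma sin_ub5 (x : ℝ) (hx : 0 ≤ x) : Real.sin x ≤ x - x^3/6 + x^5/120 := by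
  have := pos_of_deriv (fun x => (x - x^3/6 + x^5/120) - Real.sin x)
      (fun x => (1 - x^2/2 + x^4/24) - Real.cos x)
      (fun x => by
        have h2 : HasDerivAt (fun x:ℝ => x - x^3/6 + x^5/120) (1 - x^2/2 + x^4/24) x := by
          have := (((hasDerivAt_id x).sub ((hasDerivAt_pow 3 x).div_const 6)).add
            ((hasDerivAt_pow 5 x).div_const 120))
          exact this.congr_deriv (by norm_num; try ring)
        exact h2.sub (Real.hasDerivAt_sin x))
      (by norm_num)
      (fun y hy => by have := cos_ub4 y hy; linarith)
      x hx
  simpa using this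

private lemma cos_lb6 (x : ℝ) (hx : 0 ≤ x) : 1 - x^2/2 + x^4/24 - x^6/720 ≤ Real.cos x := by
  have := pos_of_deriv (fun x => Real.cos x - (1 - x^2/2 + x^4/24 - x^6/720))
      (fun x => (x - x^3/6 + x^5/120) - Real.sin x)
      (fun x => by
        have h2 : HasDerivAt (fun x:ℝ => 1 - x^2/2 + x^4/24 - x^6/720) (-(x - x^3/6 + x^5/120)) x := by
          have := ((((hasDerivAt_const x (1:ℝ)).sub ((hasDerivAt_pow 2 x).div_const 2)).add
            ((hasDerivAt_pow 4 x).div_const 24)).sub ((hasDerivAt_pow 6 x).div_const 720))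
          exact this.congr_deriv (by norm_num; try ring)
        have := (Real.hasDerivAt_cos x).sub h2
        exact this.congr_deriv (by ring))
      (by norm_num)
      (fun y hy => by have := sin_ub5 y hy; linarith)
      x hx
  simpa using sub_nonneg.mp this

private lemma sin_lb7 (x : ℝ) (hx : 0 ≤ x) : x - x^3/6 + x^5/120 - x^7/5040 ≤ Real.sin x := by
  have := pos_of_deriv (fun x => Real.sin x - (x - x^3/6 + x^5/120 - x^7/5040))
      (fun x => Real.cos x - (1 - x^2/2 + x^4/24 - x^6/720))
      (fun x => by
        have h2 : HasDerivAt (fun x:ℝ => x - x^3/6 + x^5/120 - x^7/5040) (1 - x^2/2 + x^4/24 - x^6/720) x := by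
          have := ((((hasDerivAt_id x).sub ((hasDerivAt_pow 3 x).div_const 6)).add
            ((hasDerivAt_pow 5 x).div_const 120)).sub ((hasDerivAt_pow 7 x).div_const 5040))
          exact this.congr_deriv (by norm_num; try ring)
        exact (Real.hasDerivAt_sin x).sub h2)
      (by norm_num)
      (fun y hy => by have := cos_lb6 y hy; linarith)
      x hx
  simpa using sub_nonneg.mp this

private lemma cos_ub8 (x : ℝ) (hx : 0 ≤ x) :
    Real.cos x ≤ 1 - x^2/2 + x^4/24 - x^6/720 + x^8/40320 := by
  have := pos_of_deriv (fun x => (1 - x^2/2 + x^4/24 - x^6/720 + x^8/40320) - Real.cos x)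
      (fun x => Real.sin x - (x - x^3/6 + x^5/120 - x^7/5040))
      (fun x => by
        have h2 : HasDerivAt (fun x:ℝ => 1 - x^2/2 + x^4/24 - x^6/720 + x^8/40320)
            (-(x - x^3/6 + x^5/120 - x^7/5040)) x := by
          have := (((((hasDerivAt_const x (1:ℝ)).sub ((hasDerivAt_pow 2 x).div_const 2)).add
            ((hasDerivAt_pow 4 x).div_const 24)).sub ((hasDerivAt_pow 6 x).div_const 720)).add
            ((hasDerivAt_pow 8 x).div_const 40320))
          exact this.congr_deriv (by norm_num; try ring)
        have := h2.sub (Real.hasDerivAt_cos x)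
        exact this.congr_deriv (by ring))
      (by norm_num)
      (fun y hy => by have := sin_lb7 y hy; linarith)
      x hx
  simpa using sub_nonneg.mp this

private lemma sin_ub9 (x : ℝ) (hx : 0 ≤ x) :
    Real.sin x ≤ x - x^3/6 + x^5/120 - x^7/5040 + x^9/362880 := by
  have := pos_of_deriv (fun x => (x - x^3/6 + x^5/120 - x^7/5040 + x^9/362880) - Real.sin x)
      (fun x => (1 - x^2/2 + x^4/24 - x^6/720 + x^8/40320) - Real.cos x)
      (fun x => by
        have h2 : HasDerivAt (fun x:ℝ => x - x^3/6 + x^5/120 - x^7/5040 + x^9/362880)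
            (1 - x^2/2 + x^4/24 - x^6/720 + x^8/40320) x := by
          have := (((((hasDerivAt_id x).sub ((hasDerivAt_pow 3 x).div_const 6)).add
            ((hasDerivAt_pow 5 x).div_const 120)).sub ((hasDerivAt_pow 7 x).div_const 5040)).add
            ((hasDerivAt_pow 9 x).div_const 362880))
          exact this.congr_deriv (by norm_num; try ring)
        exact h2.sub (Real.hasDerivAt_sin x))
      (by norm_num)
      (fun y hy => by have := cos_ub8 y hy; linarith)
      x hx
  simpa using sub_nonneg.mp this

private lemma cos_lb10 (x : ℝ) (hx : 0 ≤ x) :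
    1 - x^2/2 + x^4/24 - x^6/720 + x^8/40320 - x^10/3628800 ≤ Real.cos x := by
  have := pos_of_deriv
      (fun x => Real.cos x - (1 - x^2/2 + x^4/24 - x^6/720 + x^8/40320 - x^10/3628800))
      (fun x => (x - x^3/6 + x^5/120 - x^7/5040 + x^9/362880) - Real.sin x)
      (fun x => by
        have h2 : HasDerivAt (fun x:ℝ => 1 - x^2/2 + x^4/24 - x^6/720 + x^8/40320 - x^10/3628800)
            (-(x - x^3/6 + x^5/120 - x^7/5040 + x^9/362880)) x := by
          have := ((((((hasDerivAt_const x (1:ℝ)).sub ((hasDerivAt_pow 2 x).div_const 2)).add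
            ((hasDerivAt_pow 4 x).div_const 24)).sub ((hasDerivAt_pow 6 x).div_const 720)).add
            ((hasDerivAt_pow 8 x).div_const 40320)).sub ((hasDerivAt_pow 10 x).div_const 3628800))
          exact this.congr_deriv (by norm_num; try ring)
        have := (Real.hasDerivAt_cos x).sub h2
        exact this.congr_deriv (by ring))
      (by norm_num)
      (fun y hy => by have := sin_ub9 y hy; linarith)
      x hx
  simpa using sub_nonneg.mp this

private lemma s_nonneg' (t : ℝ) (h1 : 1.4 ≤ t) (h2 : t ≤ 3.141593) :
    0 ≤ (-1246322586878104563210751222197889/3200000000000000000000000000000000000 : ℝ)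
      + (147075765380232008820066972932709/400000000000000000000000000000000) * t
      + (592580568327848590739900724619/9600000000000000000000000000000) * t^2
      + (-23532994279477064907408793/1600000000000000000000000000) * t^3
      + (-16289651230202187883409/5760000000000000000000000) * t^4
      + (224336851685775829/800000000000000000000) * t^5
      + (1613382546572693/28800000000000000000) * t^6
      + (-51028895099/14400000000000000) * t^7
      + (-197022761/259200000000000) * t^8 := by
  nlinarith [mul_nonneg (sub_nonneg.2 h1) (sub_nonneg.2 h2), sq_nonneg t, sq_nonneg (t-2.2),
    mul_nonneg (mul_nonneg (sub_nonneg.2 h1) (sub_nonneg.2 h2)) (sq_nonneg t),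
    mul_nonneg (mul_nonneg (sub_nonneg.2 h1) (sub_nonneg.2 h2)) (sq_nonneg (t*t)),
    mul_nonneg (mul_nonneg (sub_nonneg.2 h1) (sub_nonneg.2 h2)) (sq_nonneg (t*t*t)),
    sq_nonneg (t*t), sq_nonneg (t*t*t), sq_nonneg (t*t*t*t)]

private lemma poly_ineq (t : ℝ) (h1 : 1.4 ≤ t) (h2 : t ≤ 3.141593) :
    0.878 * (3.141593 * (t^2/2 - t^4/24 + t^6/720 - t^8/40320 + t^10/3628800)) < 2*t := by
  have hs := s_nonneg' t h1 h2
  nlinarith [mul_nonneg (sq_nonneg (t - 2.331)) hs, h1, h2]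

theorem stmt_1 (θ : ℝ) (h0 : 0 < θ) (hπ : θ ≤ π) :
    2 * θ / (π * (1 - Real.cos θ)) > 0.878 := by
  have hpi_lt : π < 3.141593 := by
    have := Real.pi_lt_d6; norm_num at this ⊢; linarith
  have hden : 0 < 1 - Real.cos θ := by
    have hs : 0 < Real.sin (θ/2) :=
      Real.sin_pos_of_pos_of_lt_pi (by linarith) (by nlinarith [Real.pi_pos])
    have h := Real.cos_two_mul (θ/2)
    rw [show 2*(θ/2) = θ by ring] at h
    have h2 := Real.sin_sq_add_cos_sq (θ/2)
    nlinarith [mul_pos hs hs]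
  have hπden : 0 < π * (1 - Real.cos θ) := mul_pos Real.pi_pos hden
  rw [gt_iff_lt, lt_div_iff₀ hπden]
  by_cases hcase : θ ≤ 1.4
  · have hub : 1 - Real.cos θ ≤ θ^2/2 := by
      have := Real.one_sub_sq_div_two_le_cos (x := θ); linarith
    have e1 : π*(1-Real.cos θ) ≤ π*(θ^2/2) :=
      mul_le_mul_of_nonneg_left hub Real.pi_pos.le
    have e2 : π*(θ^2/2) ≤ 3.141593*(θ^2/2) :=
      mul_le_mul_of_nonneg_right hpi_lt.le (by positivity)
    have e3 : θ^2 ≤ 1.4*θ := by nlinarith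
    nlinarith
  · push_neg at hcase
    have hc := cos_lb10 θ h0.le
    have hub : 1 - Real.cos θ ≤ θ^2/2 - θ^4/24 + θ^6/720 - θ^8/40320 + θ^10/3628800 := by
      linarith
    have hQpos : (0:ℝ) < θ^2/2 - θ^4/24 + θ^6/720 - θ^8/40320 + θ^10/3628800 :=
      lt_of_lt_of_le hden hub
    have hp := poly_ineq θ (le_of_lt hcase) (by linarith)
    have e1 : π*(1-Real.cos θ) ≤ π*(θ^2/2 - θ^4/24 + θ^6/720 - θ^8/40320 + θ^10/3628800) :=
      mul_le_mul_of_nonneg_left hub Real.pi_pos.le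
    have e2 : π*(θ^2/2 - θ^4/24 + θ^6/720 - θ^8/40320 + θ^10/3628800)
        ≤ 3.141593*(θ^2/2 - θ^4/24 + θ^6/720 - θ^8/40320 + θ^10/3628800) :=
      mul_le_mul_of_nonneg_right hpi_lt.le hQpos.le
    linarith
end

section
/- If θ₀ ∈ (π/2, π) satisfies 1 - cos θ₀ - θ₀ sin θ₀ ≤ 0, then for all θ ∈ (0, π], 1 - cos θ ≤ θ sin θ₀, and consequently 2θ/(π(1 - cos θ)) ≥ 2/(π sin θ₀). -/
open Real Set

private lemma sin_le_sin_right {a b : ℝ} (ha : π / 2 ≤ a) (hab : a ≤ b) (hb : b ≤ π) :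
    Real.sin b ≤ Real.sin a := by
  rw [← Real.sin_pi_sub a, ← Real.sin_pi_sub b]
  exact Real.sin_le_sin_of_le_of_le_pi_div_two (by linarith) (by linarith) (by linarith)

private lemma key_mono (θ₀ : ℝ) (h1 : π / 2 < θ₀) (h2 : θ₀ < π)
    (h : 1 - Real.cos θ₀ - θ₀ * Real.sin θ₀ ≤ 0) :
    ∀ θ ∈ Icc (0 : ℝ) π, 1 - Real.cos θ ≤ θ * Real.sin θ₀ := by
  have pi_pos := Real.pi_pos
  set g : ℝ → ℝ := fun x => x * Real.sin θ₀ - (1 - Real.cos x) with hg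
  have hder : ∀ x, HasDerivAt g (Real.sin θ₀ - Real.sin x) x := by
    intro x
    have h1' : HasDerivAt (fun x : ℝ => x * Real.sin θ₀) (Real.sin θ₀) x := by
      simpa using (hasDerivAt_id x).mul_const (Real.sin θ₀)
    have h2' : HasDerivAt (fun x : ℝ => 1 - Real.cos x) (Real.sin x) x := by
      simpa using (Real.hasDerivAt_cos x).const_sub (1 : ℝ)
    exact h1'.sub h2'
  have hcont : Continuous g := by
    fun_prop
  have hgθ₀ : 0 ≤ g θ₀ := by simp only [hg]; linarith
  have hg0 : g 0 = 0 := by simp [hg]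
  -- g is monotone on [0, π - θ₀]
  have hm1 : MonotoneOn g (Icc 0 (π - θ₀)) := by
    apply monotoneOn_of_hasDerivWithinAt_nonneg (convex_Icc _ _) hcont.continuousOn
      (fun x hx => (hder x).hasDerivWithinAt)
    intro x hx
    rw [interior_Icc] at hx
    have : Real.sin x ≤ Real.sin (π - θ₀) :=
      Real.sin_le_sin_of_le_of_le_pi_div_two (by linarith [hx.1]) (by linarith) (le_of_lt hx.2)
    rw [Real.sin_pi_sub] at this
    linarith
  -- g is antitone on [π - θ₀, θ₀]
  have hm2 : AntitoneOn g (Icc (π - θ₀) θ₀) := by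
    apply antitoneOn_of_hasDerivWithinAt_nonpos (convex_Icc _ _) hcont.continuousOn
      (fun x hx => (hder x).hasDerivWithinAt)
    intro x hx
    rw [interior_Icc] at hx
    have hs : Real.sin θ₀ ≤ Real.sin x := by
      rcases le_total x (π / 2) with hc | hc
      · have : Real.sin (π - θ₀) ≤ Real.sin x :=
          Real.sin_le_sin_of_le_of_le_pi_div_two (by linarith) hc (le_of_lt hx.1)
        rwa [Real.sin_pi_sub] at this
      · exact sin_le_sin_right hc (le_of_lt hx.2) (le_of_lt h2)
    linarith
  -- g is monotone on [θ₀, π]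
  have hm3 : MonotoneOn g (Icc θ₀ π) := by
    apply monotoneOn_of_hasDerivWithinAt_nonneg (convex_Icc _ _) hcont.continuousOn
      (fun x hx => (hder x).hasDerivWithinAt)
    intro x hx
    rw [interior_Icc] at hx
    have := sin_le_sin_right (le_of_lt h1) (le_of_lt hx.1) (le_of_lt hx.2)
    linarith
  intro θ hθ
  have key : 0 ≤ g θ := by
    rcases le_total θ (π - θ₀) with hc | hc
    · have := hm1 ⟨le_refl 0, by linarith⟩ ⟨hθ.1, hc⟩ hθ.1
      rw [hg0] at this; linarith
    rcases le_total θ θ₀ with hc2 | hc2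
    · have := hm2 ⟨hc, hc2⟩ ⟨by linarith, le_refl _⟩ hc2
      linarith
    · have := hm3 ⟨le_refl _, le_of_lt h2⟩ ⟨hc2, hθ.2⟩ hc2
      linarith
  simp only [hg] at key; linarith

theorem stmt_4 (θ₀ : ℝ) (hθ₀ : θ₀ ∈ Ioo (π / 2) π)
    (h : 1 - Real.cos θ₀ - θ₀ * Real.sin θ₀ ≤ 0) :
    ∀ θ ∈ Ioc (0 : ℝ) π,
      1 - Real.cos θ ≤ θ * Real.sin θ₀ ∧
      2 * θ / (π * (1 - Real.cos θ)) ≥ 2 / (π * Real.sin θ₀) := by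
  obtain ⟨h1, h2⟩ := hθ₀
  have pi_pos := Real.pi_pos
  intro θ hθ
  have key := key_mono θ₀ h1 h2 h θ ⟨le_of_lt hθ.1, hθ.2⟩
  refine ⟨key, ?_⟩
  have hsin : 0 < Real.sin θ₀ := Real.sin_pos_of_pos_of_lt_pi (by linarith) h2
  have hcos : Real.cos θ < 1 := by
    have := Real.strictAntiOn_cos ⟨le_refl 0, le_of_lt pi_pos⟩ ⟨le_of_lt hθ.1, hθ.2⟩ hθ.1
    rwa [Real.cos_zero] at this
  have h1c : 0 < 1 - Real.cos θ := by linarith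
  rw [ge_iff_le, div_le_div_iff₀ (by positivity) (by positivity)]
  nlinarith [mul_pos hθ.1 hsin]
end

section
/- Let w_{ij} ≥ 0 for all i < j, and let v₁, ..., vₙ be unit vectors in R^n. If C(r) = Σ_{i<j} w_{ij} · 1[sgn(⟨v_i,r⟩) ≠ sgn(⟨v_j,r⟩)] for r uniform on the sphere, then E[C] = Σ_{i<j} w_{ij} arccos(⟨v_i,v_j⟩)/π ≥ α · (1/2) Σ_{i<j} w_{ij}(1 - ⟨v_i,v_j⟩), where α = min_{0<θ≤π} 2θ/(π(1-cos θ)). -/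
open Real Set Finset MeasureTheory RealInnerProductSpace
open scoped ENNReal
namespace GW
set_option linter.unusedSectionVars false
variable {n : ℕ}
local notation "E" => EuclideanSpace ℝ (Fin n)



lemma extend_onb {k : ℕ} (hk : k ≤ n) {f : Fin k → E} (hf : Orthonormal ℝ f) :
    ∃ b : OrthonormalBasis (Fin n) ℝ E, ∀ j : Fin k, b (Fin.castLE hk j) = f j := by
  have card : Module.finrank ℝ E = Fintype.card (Fin n) := by
    simp [finrank_euclideanSpace_fin]
  set f' : Fin n → E := fun i => if h : (i : ℕ) < k then f ⟨i, h⟩ else 0 with hf'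
  have hres : Orthonormal ℝ (Set.restrict {i : Fin n | (i : ℕ) < k} f') := by
    have : (Set.restrict {i : Fin n | (i : ℕ) < k} f') =
        f ∘ (fun i : {i : Fin n | (i : ℕ) < k} => (⟨i.1, i.2⟩ : Fin k)) := by
      funext i; show f' i = _; exact dif_pos i.2
    rw [this]
    exact hf.comp _ (by intro a b hab; ext; simpa [Fin.ext_iff] using hab)
  obtain ⟨b, hb⟩ := hres.exists_orthonormalBasis_extension_of_card_eq card
  exact ⟨b, fun j => by simpa [f'] using hb (Fin.castLE hk j) (by simp [j.2])⟩

lemma exists_iso {k : ℕ} (hk : k ≤ n) {f g : Fin k → E}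
    (hf : Orthonormal ℝ f) (hg : Orthonormal ℝ g) :
    ∃ T : E ≃ₗᵢ[ℝ] E, ∀ i, T (f i) = g i := by
  obtain ⟨bf, hbf⟩ := extend_onb hk hf
  obtain ⟨bg, hbg⟩ := extend_onb hk hg
  refine ⟨bf.repr.trans bg.repr.symm, fun i => ?_⟩
  have : bf.repr (f i) = EuclideanSpace.single (Fin.castLE hk i) 1 := by
    rw [← hbf i]; exact bf.repr_self _
  simp only [LinearIsometryEquiv.trans_apply, this]
  rw [bg.repr_symm_single, hbg]

def perp {k : ℕ} (f : Fin k → E) : Set (EuclideanSpace ℝ (Fin n)) := {r | ∀ i, ⟪f i, r⟫ = 0}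

lemma measurable_inner_fun (u : E) : Measurable (fun r : E => ⟪u, r⟫) :=
  (innerSL ℝ u).continuous.measurable

lemma perp_measurable {k : ℕ} (f : Fin k → E) : MeasurableSet (perp f) := by
  have : perp f = ⋂ i, {r : E | ⟪f i, r⟫ = 0} := by ext r; simp [perp]
  rw [this]
  exact MeasurableSet.iInter fun i =>
    measurableSet_eq_fun (measurable_inner_fun _) measurable_const

variable (μ : Measure (EuclideanSpace ℝ (Fin n))) [IsProbabilityMeasure μ]

lemma measure_preimage
    (hinv : ∀ T : EuclideanSpace ℝ (Fin n) ≃ₗᵢ[ℝ] EuclideanSpace ℝ (Fin n),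
      Measure.map T μ = μ)
    (T : E ≃ₗᵢ[ℝ] E) {A : Set (EuclideanSpace ℝ (Fin n))} (hA : MeasurableSet A) :
    μ (T ⁻¹' A) = μ A := by
  conv_rhs => rw [← hinv T]
  rw [Measure.map_apply T.continuous.measurable hA]

lemma perp_iso
    (hinv : ∀ T : EuclideanSpace ℝ (Fin n) ≃ₗᵢ[ℝ] EuclideanSpace ℝ (Fin n),
      Measure.map T μ = μ)
    {k : ℕ} (hk : k ≤ n) {f g : Fin k → E}
    (hf : Orthonormal ℝ f) (hg : Orthonormal ℝ g) : μ (perp f) = μ (perp g) := by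
  obtain ⟨T, hT⟩ := exists_iso hk hf hg
  have hpre : T ⁻¹' (perp g) = perp f := by
    ext r
    simp only [perp, Set.mem_preimage, Set.mem_setOf_eq]
    refine forall_congr' fun i => ?_
    rw [← hT i, T.inner_map_map]
  rw [← hpre, measure_preimage μ hinv T (perp_measurable g)]

lemma perp_zero_aux
    (hinv : ∀ T : EuclideanSpace ℝ (Fin n) ≃ₗᵢ[ℝ] EuclideanSpace ℝ (Fin n),
      Measure.map T μ = μ)
    (hsph : μ (Metric.sphere (0 : EuclideanSpace ℝ (Fin n)) 1) = 1) :
    ∀ m k, k + m = n → 1 ≤ k → ∀ f : Fin k → E, Orthonormal ℝ f → μ (perp f) = 0 := by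
  intro m
  induction m with
  | zero =>
    intro k hkm hk1 f hf
    have hk : k = n := by omega
    subst hk
    obtain ⟨b, hb⟩ := extend_onb (le_refl k) hf
    have hb' : ∀ j, b j = f j := fun j => by
      have := hb j
      rwa [show Fin.castLE (le_refl k) j = j from by ext; rfl] at this
    have hset : perp f = {(0 : EuclideanSpace ℝ (Fin k))} := by
      ext r
      simp only [perp, Set.mem_setOf_eq, Set.mem_singleton_iff]
      constructor
      · intro h
        have : b.repr r = 0 := by
          ext i
          rw [b.repr_apply_apply]
          simpa [hb' i] using h i
        simpa using b.repr.injective (by simpa using this)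
      · rintro rfl; simp
    rw [hset]
    refine measure_mono_null ?_ (?_ : μ (Metric.sphere (0 : EuclideanSpace ℝ (Fin k)) 1)ᶜ = 0)
    · intro x hx
      simp only [Set.mem_singleton_iff] at hx
      subst hx
      simp [Metric.mem_sphere]
    · rw [measure_compl (Metric.isClosed_sphere.measurableSet) (measure_ne_top μ _),
        measure_univ, hsph]
      simp
  | succ m ih =>
    intro k hkm hk1 f hf
    have hkn : k ≤ n := by omega
    have hk1n : k + 1 ≤ n := by omega
    obtain ⟨b, hb⟩ := extend_onb hkn hf
    set g : Fin (k+1) → E := fun j => b (Fin.castLE hk1n j) with hgdef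
    have hgon : Orthonormal ℝ g :=
      b.orthonormal.comp _ (Fin.castLE_injective hk1n)
    have hgf : ∀ j : Fin k, g (Fin.castSucc j) = f j := by
      intro j
      have h1 : Fin.castLE hk1n (Fin.castSucc j) = Fin.castLE hkn j := by ext; rfl
      rw [hgdef]; simp only; rw [h1, hb]
    have hZ' : μ (perp g) = 0 := ih (k+1) (by omega) (by omega) g hgon
    set idx : Fin k := ⟨k-1, by omega⟩ with hidx
    set gnew : E := g (Fin.last k) with hgnew
    have hgite := orthonormal_iff_ite.mp hgon
    have hff := orthonormal_iff_ite.mp hf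
    have hfg : ∀ i : Fin k, ⟪f i, gnew⟫ = 0 := by
      intro i
      rw [← hgf i, hgnew]
      have := hgite (Fin.castSucc i) (Fin.last k)
      rwa [if_neg (ne_of_lt (Fin.castSucc_lt_last i))] at this
    have hgg : ⟪gnew, gnew⟫ = 1 := by
      have := hgite (Fin.last k) (Fin.last k); rwa [if_pos rfl] at this
    set d : ℕ → ℝ := fun t => Real.sqrt (1 + (t:ℝ)^2) with hddef
    have hd : ∀ t, 0 < d t := fun t => Real.sqrt_pos.2 (by positivity)
    have hd2 : ∀ t, d t ^ 2 = 1 + (t:ℝ)^2 := fun t => Real.sq_sqrt (by positivity)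
    set u : ℕ → E := fun t => (d t)⁻¹ • (f idx + (t:ℝ) • gnew) with hudef
    have hinner_u : ∀ t (r : E), ⟪u t, r⟫ = (d t)⁻¹ * (⟪f idx, r⟫ + t * ⟪gnew, r⟫) := by
      intro t r
      rw [hudef]
      simp only
      rw [real_inner_smul_left, inner_add_left, real_inner_smul_left]
    have hinner_u' : ∀ t (r : E), ⟪r, u t⟫ = (d t)⁻¹ * (⟪f idx, r⟫ + t * ⟪gnew, r⟫) := by
      intro t r; rw [real_inner_comm]; exact hinner_u t r
    set F : ℕ → (Fin k → E) := fun t => Function.update f idx (u t) with hFdef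
    have hFon : ∀ t, Orthonormal ℝ (F t) := by
      intro t
      rw [orthonormal_iff_ite]
      intro i j
      have hgf0 : ⟪gnew, f idx⟫ = 0 := by rw [real_inner_comm]; exact hfg idx
      have huu : ⟪u t, u t⟫ = 1 := by
        rw [hinner_u, hinner_u' t (f idx), hinner_u' t gnew, hff idx idx, if_pos rfl,
          hfg idx, hgf0, hgg]
        have h2 := hd2 t
        have hdne := (hd t).ne'
        field_simp
        nlinarith [hd t]
      have hfu : ∀ i : Fin k, i ≠ idx → ⟪f i, u t⟫ = 0 := by
        intro i hi
        have hgfi : ⟪gnew, f i⟫ = 0 := by rw [real_inner_comm]; exact hfg i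
        have hfidx : ⟪f idx, f i⟫ = 0 := by
          rw [hff idx i, if_neg (fun h => hi h.symm)]
        rw [hinner_u' t (f i), hfidx, hgfi]
        ring
      by_cases hi : i = idx <;> by_cases hj : j = idx
      · subst hi; subst hj
        simpa [hFdef, Function.update_self] using huu
      · subst hi
        rw [if_neg (fun h => hj h.symm)]
        rw [hFdef]; simp only [Function.update_self, Function.update_of_ne hj]
        rw [real_inner_comm]; exact hfu j hj
      · subst hj
        rw [if_neg hi]
        rw [hFdef]; simp only [Function.update_self, Function.update_of_ne hi]
        exact hfu i hi
      · rw [hFdef]; simp only [Function.update_of_ne hi, Function.update_of_ne hj]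
        exact hff i j
    have hμF : ∀ t, μ (perp (F t)) = μ (perp f) := fun t => perp_iso μ hinv hkn (hFon t) hf
    have hsub : ∀ t, perp g ⊆ perp (F t) := by
      intro t r hr i
      have h1 : ⟪f idx, r⟫ = 0 := by rw [← hgf idx]; exact hr _
      have h2 : ⟪gnew, r⟫ = 0 := hr _
      by_cases hi : i = idx
      · subst hi
        rw [hFdef]; simp only [Function.update_self]
        rw [hinner_u, h1, h2]; ring
      · rw [hFdef]; simp only [Function.update_of_ne hi]
        rw [← hgf i]; exact hr _
    have hcap : ∀ t t', t ≠ t' → perp (F t) ∩ perp (F t') ⊆ perp g := by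
      intro t t' htt r hr
      obtain ⟨h1, h2⟩ := hr
      have e1 : ⟪f idx, r⟫ + t * ⟪gnew, r⟫ = 0 := by
        have := h1 idx
        rw [hFdef] at this; simp only [Function.update_self] at this
        rw [hinner_u] at this
        rcases mul_eq_zero.mp this with h | h
        · exact absurd h (by positivity)
        · exact h
      have e2 : ⟪f idx, r⟫ + t' * ⟪gnew, r⟫ = 0 := by
        have := h2 idx
        rw [hFdef] at this; simp only [Function.update_self] at this
        rw [hinner_u] at this
        rcases mul_eq_zero.mp this with h | h
        · exact absurd h (by positivity)
        · exact h
      have hb0 : ⟪gnew, r⟫ = 0 := by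
        have hne : (t:ℝ) ≠ (t':ℝ) := by exact_mod_cast htt
        have : ((t:ℝ) - t') * ⟪gnew, r⟫ = 0 := by linarith
        rcases mul_eq_zero.mp this with h | h
        · exact absurd (by linarith : (t:ℝ) = t') hne
        · exact h
      have ha0 : ⟪f idx, r⟫ = 0 := by nlinarith
      intro j
      refine Fin.lastCases ?_ ?_ j
      · exact hb0
      · intro i
        rw [hgf i]
        by_cases hi : i = idx
        · subst hi; exact ha0
        · have := h1 i
          rw [hFdef] at this; simp only [Function.update_of_ne hi] at this
          exact this
    set B : ℕ → Set (EuclideanSpace ℝ (Fin n)) := fun t => perp (F t) \ perp g with hBdef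
    have hBmeas : ∀ t, MeasurableSet (B t) := fun t =>
      (perp_measurable _).diff (perp_measurable _)
    have hBdisj : Pairwise (Function.onFun Disjoint B) := by
      intro t t' htt
      rw [Function.onFun]
      apply Set.disjoint_left.2
      intro r hr hr'
      exact hr.2 (hcap t t' htt ⟨hr.1, hr'.1⟩)
    have hBmeasure : ∀ t, μ (B t) = μ (perp f) - μ (perp g) := by
      intro t
      rw [hBdef]
      simp only
      rw [measure_diff (hsub t) (perp_measurable g).nullMeasurableSet (measure_ne_top μ _), hμF]
    by_cases hzero : μ (perp f) - μ (perp g) = 0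
    · have hle : μ (perp f) ≤ μ (perp g) := tsub_eq_zero_iff_le.mp hzero
      exact le_antisymm (hZ' ▸ hle) (by simp)
    · exfalso
      have h1 : μ (⋃ t, B t) = ∑' t, μ (B t) := measure_iUnion hBdisj hBmeas
      have h2 : (∑' t : ℕ, μ (B t)) = ⊤ := by
        rw [tsum_congr hBmeasure]
        exact ENNReal.tsum_const_eq_top_of_ne_zero hzero
      have h3 : μ (⋃ t, B t) ≤ 1 := prob_le_one
      rw [h1, h2] at h3
      exact absurd h3 (by simp)

lemma perp_zero
    (hinv : ∀ T : EuclideanSpace ℝ (Fin n) ≃ₗᵢ[ℝ] EuclideanSpace ℝ (Fin n),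
      Measure.map T μ = μ)
    (hsph : μ (Metric.sphere (0 : EuclideanSpace ℝ (Fin n)) 1) = 1)
    {k : ℕ} (hk1 : 1 ≤ k) (hkn : k ≤ n) {f : Fin k → E} (hf : Orthonormal ℝ f) :
    μ (perp f) = 0 :=
  perp_zero_aux μ hinv hsph (n - k) k (by omega) hk1 f hf


noncomputable def ee (hn : 2 ≤ n) (θ : ℝ) : EuclideanSpace ℝ (Fin n) :=
  Real.cos θ • EuclideanSpace.single ⟨0, by omega⟩ (1:ℝ)
  + Real.sin θ • EuclideanSpace.single ⟨1, by omega⟩ (1:ℝ)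

variable (hn : 2 ≤ n)

lemma inner_single_single (i j : Fin n) (a b : ℝ) :
    ⟪EuclideanSpace.single i a, EuclideanSpace.single j b⟫ = if i = j then a * b else 0 := by
  rw [EuclideanSpace.inner_single_left, EuclideanSpace.single_apply]
  by_cases h : i = j <;> simp [h, eq_comm]

lemma inner_ee_ee (a b : ℝ) : ⟪ee hn a, ee hn b⟫ = Real.cos (a - b) := by
  have hne : (⟨0, by omega⟩ : Fin n) ≠ ⟨1, by omega⟩ := by simp [Fin.ext_iff]
  simp only [ee, inner_add_left, inner_add_right, real_inner_smul_left, real_inner_smul_right,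
    inner_single_single, if_pos rfl, if_neg hne, if_neg (Ne.symm hne), if_true]
  rw [Real.cos_sub]; ring

lemma inner_ee (a : ℝ) (r : E) :
    ⟪ee hn a, r⟫ = Real.cos a * ⟪EuclideanSpace.single ⟨0, by omega⟩ (1:ℝ), r⟫
      + Real.sin a * ⟪EuclideanSpace.single ⟨1, by omega⟩ (1:ℝ), r⟫ := by
  simp [ee, inner_add_left, real_inner_smul_left]

lemma norm_ee (a : ℝ) : ‖ee hn a‖ = 1 := by
  have h := inner_ee_ee hn a a
  simp only [sub_self, Real.cos_zero] at h
  have := real_inner_self_eq_norm_sq (ee hn a)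
  nlinarith [norm_nonneg (ee hn a)]

lemma exists_iso2 (hn : 2 ≤ n) {u0 u1 w0 w1 : E} (h0 : ‖u0‖ = 1) (h1 : ‖u1‖ = 1) (h01 : ⟪u0,u1⟫ = 0)
    (k0 : ‖w0‖ = 1) (k1 : ‖w1‖ = 1) (k01 : ⟪w0,w1⟫ = 0) :
    ∃ T : E ≃ₗᵢ[ℝ] E, T u0 = w0 ∧ T u1 = w1 := by
  have onf : ∀ (u0 u1 : E), ‖u0‖ = 1 → ‖u1‖ = 1 → ⟪u0,u1⟫ = 0 →
      Orthonormal ℝ (![u0, u1]) := by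
    intro u0 u1 h0 h1 h01
    rw [orthonormal_iff_ite]
    intro i j
    fin_cases i <;> fin_cases j
    · show ⟪u0, u0⟫ = _
      rw [real_inner_self_eq_norm_sq, h0]; norm_num
    · show ⟪u0, u1⟫ = _
      rw [h01]; norm_num
    · show ⟪u1, u0⟫ = _
      rw [real_inner_comm, h01]; norm_num
    · show ⟪u1, u1⟫ = _
      rw [real_inner_self_eq_norm_sq, h1]; norm_num
  obtain ⟨T, hT⟩ := exists_iso hn (onf u0 u1 h0 h1 h01) (onf w0 w1 k0 k1 k01)
  exact ⟨T, by simpa using hT 0, by simpa using hT 1⟩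

lemma ee_decomp (c φ : ℝ) : ee hn (c + φ) = Real.cos φ • ee hn c + Real.sin φ • ee hn (c + π/2) := by
  simp only [ee, smul_add, smul_smul, Real.cos_add c φ, Real.sin_add c φ,
    Real.cos_add_pi_div_two, Real.sin_add_pi_div_two]
  module

lemma ee_decomp' (s φ : ℝ) : ee hn (s - φ) = Real.cos φ • ee hn s + Real.sin φ • ee hn (s - π/2) := by
  simp only [ee, smul_add, smul_smul, Real.cos_sub s φ, Real.sin_sub s φ,
    Real.cos_sub_pi_div_two, Real.sin_sub_pi_div_two]
  module

lemma exists_rot (c : ℝ) : ∃ T : E ≃ₗᵢ[ℝ] E, ∀ φ, T (ee hn φ) = ee hn (φ + c) := by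
  have o1 : ⟪ee hn c, ee hn (c + π/2)⟫ = 0 := by
    rw [inner_ee_ee]; simp
  have o0 : ⟪ee hn 0, ee hn (0 + π/2)⟫ = 0 := by
    rw [inner_ee_ee]; simp
  obtain ⟨T, hT0, hT1⟩ := exists_iso2 hn (norm_ee hn 0) (norm_ee hn (0 + π/2)) o0
    (norm_ee hn c) (norm_ee hn (c + π/2)) o1
  refine ⟨T, fun φ => ?_⟩
  have h1 : ee hn φ = Real.cos φ • ee hn 0 + Real.sin φ • ee hn (0 + π/2) := by
    simpa using ee_decomp hn 0 φ
  rw [h1, map_add, _root_.map_smul, _root_.map_smul, hT0, hT1, ← ee_decomp hn c φ, add_comm]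

lemma exists_refl (s : ℝ) : ∃ T : E ≃ₗᵢ[ℝ] E, ∀ φ, T (ee hn φ) = ee hn (s - φ) := by
  have o1 : ⟪ee hn s, ee hn (s - π/2)⟫ = 0 := by
    rw [inner_ee_ee]; simp
  have o0 : ⟪ee hn 0, ee hn (0 + π/2)⟫ = 0 := by
    rw [inner_ee_ee]; simp
  obtain ⟨T, hT0, hT1⟩ := exists_iso2 hn (norm_ee hn 0) (norm_ee hn (0 + π/2)) o0
    (norm_ee hn s) (norm_ee hn (s - π/2)) o1
  refine ⟨T, fun φ => ?_⟩
  have h1 : ee hn φ = Real.cos φ • ee hn 0 + Real.sin φ • ee hn (0 + π/2) := by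
    simpa using ee_decomp hn 0 φ
  rw [h1, map_add, _root_.map_smul, _root_.map_smul, hT0, hT1, ← ee_decomp' hn s φ]


def lune (u v : EuclideanSpace ℝ (Fin n)) : Set (EuclideanSpace ℝ (Fin n)) :=
  {r | 0 ≤ ⟪u, r⟫ ∧ ⟪v, r⟫ < 0}

lemma lune_measurable (u v : E) : MeasurableSet (lune u v) :=
  (measurableSet_le measurable_const (measurable_inner_fun u)).inter
    (measurableSet_lt (measurable_inner_fun v) measurable_const)

lemma lune_iso
    (hinv : ∀ T : EuclideanSpace ℝ (Fin n) ≃ₗᵢ[ℝ] EuclideanSpace ℝ (Fin n),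
      Measure.map T μ = μ) (T : E ≃ₗᵢ[ℝ] E) (u v : E) :
    μ (lune (T u) (T v)) = μ (lune u v) := by
  have hpre : T ⁻¹' (lune (T u) (T v)) = lune u v := by
    ext r
    simp only [lune, Set.mem_preimage, Set.mem_setOf_eq]
    rw [show ⟪T u, T r⟫ = ⟪u, r⟫ from T.inner_map_map u r,
      show ⟪T v, T r⟫ = ⟪v, r⟫ from T.inner_map_map v r]
  rw [← hpre, measure_preimage μ hinv T (lune_measurable _ _)]

/-- pure trigonometric inequality 1 -/
lemma trig1 {δ1 δ x y : ℝ} (h1 : 0 < δ1) (h2 : δ1 < δ) (h3 : δ ≤ π) (hx : 0 < x)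
    (hP : Real.cos δ1 * x + Real.sin δ1 * y < 0) : Real.cos δ * x + Real.sin δ * y < 0 := by
  have s1 : 0 < Real.sin δ1 := Real.sin_pos_of_pos_of_lt_pi h1 (lt_of_lt_of_le h2 h3)
  have sδ : 0 ≤ Real.sin δ := Real.sin_nonneg_of_nonneg_of_le_pi (by linarith) h3
  have sd : 0 < Real.sin (δ - δ1) :=
    Real.sin_pos_of_pos_of_lt_pi (by linarith) (by linarith)
  have key : Real.sin δ1 * (Real.cos δ * x + Real.sin δ * y)
      = Real.sin δ * (Real.cos δ1 * x + Real.sin δ1 * y) - x * Real.sin (δ - δ1) := by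
    rw [Real.sin_sub]; ring
  nlinarith [mul_nonneg sδ (le_of_lt (neg_pos.mpr hP)), mul_pos hx sd]

/-- pure trigonometric inequality 2 -/
lemma trig2 {δ1 δ x y : ℝ} (h1 : 0 < δ1) (h2 : δ1 < δ) (h3 : δ ≤ π)
    (hP1 : 0 ≤ Real.cos δ1 * x + Real.sin δ1 * y)
    (hP : Real.cos δ * x + Real.sin δ * y < 0) : 0 < x := by
  have s1 : 0 < Real.sin δ1 := Real.sin_pos_of_pos_of_lt_pi h1 (lt_of_lt_of_le h2 h3)
  have sδ : 0 ≤ Real.sin δ := Real.sin_nonneg_of_nonneg_of_le_pi (by linarith) h3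
  have sd : 0 < Real.sin (δ - δ1) :=
    Real.sin_pos_of_pos_of_lt_pi (by linarith) (by linarith)
  have key : x * Real.sin (δ - δ1)
      = Real.sin δ * (Real.cos δ1 * x + Real.sin δ1 * y)
        - Real.sin δ1 * (Real.cos δ * x + Real.sin δ * y) := by
    rw [Real.sin_sub]; ring
  nlinarith [mul_nonneg sδ hP1, mul_pos s1 (neg_pos.mpr hP)]

variable (hn : 2 ≤ n)

lemma ee_zero : ee hn 0 = EuclideanSpace.single ⟨0, by omega⟩ (1:ℝ) := by
  simp [ee]

lemma ee_pi : ee hn π = -(EuclideanSpace.single ⟨0, by omega⟩ (1:ℝ)) := by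
  simp [ee]

lemma hpl_zero
    (hinv : ∀ T : EuclideanSpace ℝ (Fin n) ≃ₗᵢ[ℝ] EuclideanSpace ℝ (Fin n),
      Measure.map T μ = μ)
    (hsph : μ (Metric.sphere (0 : EuclideanSpace ℝ (Fin n)) 1) = 1) :
    μ {r : EuclideanSpace ℝ (Fin n) | ⟪ee hn 0, r⟫ = 0} = 0 := by
  have hf : Orthonormal ℝ (fun _ : Fin 1 => ee hn 0) := by
    rw [orthonormal_iff_ite]
    intro i j
    rw [if_pos (Subsingleton.elim i j), inner_ee_ee]
    simp
  have : {r : EuclideanSpace ℝ (Fin n) | ⟪ee hn 0, r⟫ = 0}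
      = perp (fun _ : Fin 1 => ee hn 0) := by
    ext r; simp [perp]
  rw [this]
  exact perp_zero μ hinv hsph le_rfl (by omega) hf

lemma lune_rot
    (hinv : ∀ T : EuclideanSpace ℝ (Fin n) ≃ₗᵢ[ℝ] EuclideanSpace ℝ (Fin n),
      Measure.map T μ = μ) (a b c : ℝ) :
    μ (lune (ee hn (a + c)) (ee hn (b + c))) = μ (lune (ee hn a) (ee hn b)) := by
  obtain ⟨T, hT⟩ := exists_rot hn c
  rw [← hT a, ← hT b, lune_iso μ hinv T]

lemma lune_refl
    (hinv : ∀ T : EuclideanSpace ℝ (Fin n) ≃ₗᵢ[ℝ] EuclideanSpace ℝ (Fin n),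
      Measure.map T μ = μ) (s a b : ℝ) :
    μ (lune (ee hn (s - a)) (ee hn (s - b))) = μ (lune (ee hn a) (ee hn b)) := by
  obtain ⟨T, hT⟩ := exists_refl hn s
  rw [← hT a, ← hT b, lune_iso μ hinv T]

lemma g_add
    (hinv : ∀ T : EuclideanSpace ℝ (Fin n) ≃ₗᵢ[ℝ] EuclideanSpace ℝ (Fin n),
      Measure.map T μ = μ)
    (hsph : μ (Metric.sphere (0 : EuclideanSpace ℝ (Fin n)) 1) = 1)
    {δ1 δ : ℝ} (h1 : 0 < δ1) (h2 : δ1 < δ) (h3 : δ ≤ π) :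
    μ (lune (ee hn 0) (ee hn δ))
      = μ (lune (ee hn 0) (ee hn δ1)) + μ (lune (ee hn δ1) (ee hn δ)) := by
  set A := lune (ee hn 0) (ee hn δ) with hA
  set A1 := lune (ee hn 0) (ee hn δ1) with hA1
  set A2 := lune (ee hn δ1) (ee hn δ) with hA2
  set H := {r : EuclideanSpace ℝ (Fin n) | ⟪ee hn 0, r⟫ = 0} with hH
  have hPa : ∀ (a : ℝ) r, ⟪ee hn a, r⟫
      = Real.cos a * ⟪ee hn 0, r⟫ + Real.sin a * ⟪EuclideanSpace.single ⟨1, by omega⟩ (1:ℝ), r⟫ := by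
    intro a r
    rw [inner_ee hn a r, ee_zero hn]
  have claim2 : A ⊆ A1 ∪ A2 := by
    intro r hr
    obtain ⟨hr1, hr2⟩ := hr
    by_cases h : ⟪ee hn δ1, r⟫ < 0
    · exact Or.inl ⟨hr1, h⟩
    · exact Or.inr ⟨not_lt.1 h, hr2⟩
  have claim1 : A1 ∪ A2 ⊆ A ∪ H := by
    rintro r (⟨hr1, hr2⟩ | ⟨hr1, hr2⟩)
    · rcases eq_or_lt_of_le hr1 with heq | hlt
      · exact Or.inr heq.symm
      · refine Or.inl ⟨hr1, ?_⟩
        rw [hPa δ r]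
        rw [hPa δ1 r] at hr2
        exact trig1 h1 h2 h3 hlt hr2
    · refine Or.inl ⟨?_, hr2⟩
      rw [hPa δ1 r] at hr1
      rw [hPa δ r] at hr2
      exact le_of_lt (trig2 h1 h2 h3 hr1 hr2)
  have hdisj : Disjoint A1 A2 := by
    rw [Set.disjoint_left]
    intro r hr hr'
    exact absurd hr'.1 (not_le.2 hr.2)
  have e1 : μ A1 + μ A2 = μ (A1 ∪ A2) := (measure_union hdisj (lune_measurable _ _)).symm
  have e2 : μ (A1 ∪ A2) ≤ μ A := by
    refine le_trans (measure_mono claim1) (le_trans (measure_union_le _ _) ?_)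
    have hH0 : μ H = 0 := hpl_zero μ hn hinv hsph
    rw [hH0, add_zero]
  have e3 : μ A ≤ μ (A1 ∪ A2) := measure_mono claim2
  rw [e1]
  exact le_antisymm e3 e2

noncomputable def G (θ : ℝ) : ℝ := (μ (lune (ee hn 0) (ee hn θ))).toReal

lemma G_nonneg (θ : ℝ) : 0 ≤ G μ hn θ := ENNReal.toReal_nonneg

lemma G_zero : G μ hn 0 = 0 := by
  have : lune (ee hn 0) (ee hn 0) = ∅ := by
    ext r
    simp only [lune, Set.mem_setOf_eq, Set.mem_empty_iff_false, iff_false, not_and]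
    intro h
    exact not_lt.2 h
  unfold G
  rw [this]
  simp

lemma G_add
    (hinv : ∀ T : EuclideanSpace ℝ (Fin n) ≃ₗᵢ[ℝ] EuclideanSpace ℝ (Fin n),
      Measure.map T μ = μ)
    (hsph : μ (Metric.sphere (0 : EuclideanSpace ℝ (Fin n)) 1) = 1)
    {δ1 δ : ℝ} (h1 : 0 < δ1) (h2 : δ1 < δ) (h3 : δ ≤ π) :
    G μ hn δ = G μ hn δ1 + G μ hn (δ - δ1) := by
  have h := g_add μ hn hinv hsph h1 h2 h3
  have h2' := lune_rot μ hn hinv 0 (δ - δ1) δ1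
  rw [zero_add, show δ - δ1 + δ1 = δ from by ring] at h2'
  rw [h2'] at h
  unfold G
  rw [h, ENNReal.toReal_add (measure_ne_top μ _) (measure_ne_top μ _)]

lemma G_pi
    (hinv : ∀ T : EuclideanSpace ℝ (Fin n) ≃ₗᵢ[ℝ] EuclideanSpace ℝ (Fin n),
      Measure.map T μ = μ)
    (hsph : μ (Metric.sphere (0 : EuclideanSpace ℝ (Fin n)) 1) = 1) :
    G μ hn π = 1/2 := by
  set U1 := lune (ee hn 0) (ee hn π) with hU1
  set U2 := lune (ee hn π) (ee hn (2*π)) with hU2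
  set H := {r : EuclideanSpace ℝ (Fin n) | ⟪ee hn 0, r⟫ = 0} with hH
  have hPa : ∀ (a : ℝ) r, ⟪ee hn a, r⟫
      = Real.cos a * ⟪ee hn 0, r⟫
        + Real.sin a * ⟪EuclideanSpace.single ⟨1, by omega⟩ (1:ℝ), r⟫ := by
    intro a r
    rw [inner_ee hn a r, ee_zero hn]
  have hU1m : ∀ r, r ∈ U1 ↔ 0 < ⟪ee hn 0, r⟫ := by
    intro r
    rw [hU1]
    simp only [lune, Set.mem_setOf_eq, hPa π r, Real.cos_pi, Real.sin_pi]
    constructor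
    · rintro ⟨ha, hb⟩; nlinarith
    · intro h; constructor; linarith; nlinarith
  have hU2m : ∀ r, r ∈ U2 ↔ ⟪ee hn 0, r⟫ < 0 := by
    intro r
    rw [hU2]
    simp only [lune, Set.mem_setOf_eq, hPa π r, hPa (2*π) r, Real.cos_pi, Real.sin_pi,
      Real.cos_two_pi, Real.sin_two_pi]
    constructor
    · rintro ⟨ha, hb⟩; nlinarith
    · intro h; constructor; linarith; nlinarith
  have hHmeas : MeasurableSet H :=
    measurableSet_eq_fun (measurable_inner_fun _) measurable_const
  have hcover : (Set.univ : Set (EuclideanSpace ℝ (Fin n))) = (U1 ∪ U2) ∪ H := by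
    ext r
    simp only [Set.mem_univ, true_iff, Set.mem_union]
    rcases lt_trichotomy (⟪ee hn 0, r⟫ : ℝ) 0 with h | h | h
    · exact Or.inl (Or.inr ((hU2m r).2 h))
    · exact Or.inr h
    · exact Or.inl (Or.inl ((hU1m r).2 h))
  have hd12 : Disjoint U1 U2 := by
    rw [Set.disjoint_left]
    intro r hr hr'
    rw [hU1m r] at hr
    rw [hU2m r] at hr'
    linarith
  have hdH : Disjoint (U1 ∪ U2) H := by
    rw [Set.disjoint_left]
    rintro r (hr | hr) hr'
    · rw [hU1m r] at hr
      rw [hH] at hr'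
      simp only [Set.mem_setOf_eq] at hr'
      linarith
    · rw [hU2m r] at hr
      rw [hH] at hr'
      simp only [Set.mem_setOf_eq] at hr'
      linarith
  have hone : (1 : ℝ≥0∞) = μ ((U1 ∪ U2) ∪ H) := by rw [← hcover, measure_univ]
  rw [measure_union hdH hHmeas, measure_union hd12 (lune_measurable _ _),
    hpl_zero μ hn hinv hsph, add_zero] at hone
  have hU2U1 : μ U2 = μ U1 := by
    have h := lune_rot μ hn hinv 0 π π
    rw [zero_add, show π + π = 2*π from by ring] at h
    exact h
  rw [hU2U1] at hone
  have := congrArg ENNReal.toReal hone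
  rw [ENNReal.toReal_add (measure_ne_top μ _) (measure_ne_top μ _)] at this
  simp only [ENNReal.toReal_one] at this
  unfold G
  rw [← hU1]
  linarith

lemma G_mono
    (hinv : ∀ T : EuclideanSpace ℝ (Fin n) ≃ₗᵢ[ℝ] EuclideanSpace ℝ (Fin n),
      Measure.map T μ = μ)
    (hsph : μ (Metric.sphere (0 : EuclideanSpace ℝ (Fin n)) 1) = 1)
    {a b : ℝ} (h0 : 0 ≤ a) (hab : a ≤ b) (hb : b ≤ π) : G μ hn a ≤ G μ hn b := by
  rcases eq_or_lt_of_le h0 with h | h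
  · rw [← h, G_zero]
    exact G_nonneg μ hn b
  · rcases eq_or_lt_of_le hab with h' | h'
    · rw [h']
    · rw [G_add μ hn hinv hsph h h' hb]
      have := G_nonneg μ hn (b - a)
      linarith

lemma G_nat
    (hinv : ∀ T : EuclideanSpace ℝ (Fin n) ≃ₗᵢ[ℝ] EuclideanSpace ℝ (Fin n),
      Measure.map T μ = μ)
    (hsph : μ (Metric.sphere (0 : EuclideanSpace ℝ (Fin n)) 1) = 1) :
    ∀ (k : ℕ), 1 ≤ k → ∀ δ : ℝ, 0 < δ → (k:ℝ) * δ ≤ π → G μ hn ((k:ℝ) * δ) = k * G μ hn δ := by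
  intro k
  induction k with
  | zero => omega
  | succ k ih =>
    intro _ δ hδ hkδ
    rcases Nat.eq_zero_or_pos k with h | h
    · subst h; norm_num
    · have hk1 : 1 ≤ k := h
      have hkpos : 0 < (k:ℝ) * δ := by
        have : (1:ℝ) ≤ (k:ℝ) := by exact_mod_cast hk1
        nlinarith
      have hlt : (k:ℝ) * δ < ((k:ℕ):ℝ) * δ + δ := by linarith
      have hcast : ((k+1:ℕ):ℝ) * δ = (k:ℝ) * δ + δ := by push_cast; ring
      rw [hcast]
      rw [G_add μ hn hinv hsph hkpos (by linarith) (by rw [← hcast] at *; linarith)]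
      rw [show (k:ℝ) * δ + δ - (k:ℝ) * δ = δ from by ring]
      rw [ih hk1 δ hδ (by rw [hcast] at hkδ; linarith)]
      push_cast
      ring

lemma G_eq
    (hinv : ∀ T : EuclideanSpace ℝ (Fin n) ≃ₗᵢ[ℝ] EuclideanSpace ℝ (Fin n),
      Measure.map T μ = μ)
    (hsph : μ (Metric.sphere (0 : EuclideanSpace ℝ (Fin n)) 1) = 1)
    {θ : ℝ} (h0 : 0 ≤ θ) (hπ : θ ≤ π) : G μ hn θ = θ / (2 * π) := by
  have hπpos : (0:ℝ) < π := Real.pi_pos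
  have hGpim : ∀ m : ℕ, 1 ≤ m → G μ hn (π / m) = 1 / (2 * m) := by
    intro m hm
    have hmpos : (0:ℝ) < m := by exact_mod_cast hm
    have h1 : (m:ℝ) * (π / m) = π := by field_simp
    have h2 := G_nat μ hn hinv hsph m hm (π / m) (by positivity) (by rw [h1])
    rw [h1, G_pi μ hn hinv hsph] at h2
    have := G_nonneg μ hn (π / m)
    field_simp at h2 ⊢
    linarith
  have hGfrac : ∀ m k : ℕ, 1 ≤ m → k ≤ m → G μ hn ((k:ℝ) * π / m) = k / (2 * m) := by
    intro m k hm hkm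
    have hmpos : (0:ℝ) < m := by exact_mod_cast hm
    rcases Nat.eq_zero_or_pos k with hk | hk
    · subst hk; simpa using G_zero μ hn
    · have hcast : (k:ℝ) * π / m = (k:ℝ) * (π / m) := by ring
      rw [hcast, G_nat μ hn hinv hsph k hk (π / m) (by positivity) ?_, hGpim m hm]
      · field_simp
      · rw [← hcast]
        rw [div_le_iff₀ hmpos]
        have : (k:ℝ) ≤ m := by exact_mod_cast hkm
        nlinarith
  have key : ∀ m : ℕ, 1 ≤ m → |G μ hn θ - θ / (2 * π)| ≤ 1 / (2 * m) := by
    intro m hm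
    have hmpos : (0:ℝ) < m := by exact_mod_cast hm
    set k := ⌊θ * m / π⌋₊ with hk
    have hknn : (0:ℝ) ≤ θ * m / π := by positivity
    have hfl : (k:ℝ) ≤ θ * m / π := Nat.floor_le hknn
    have hfl2 : θ * m / π < (k:ℝ) + 1 := Nat.lt_floor_add_one _
    have hkm : k ≤ m := by
      have : θ * m / π ≤ m := by
        rw [div_le_iff₀ hπpos]
        nlinarith
      exact_mod_cast le_trans (Nat.floor_le_of_le this) (by simp)
    have hfl' : (k:ℝ) * π ≤ θ * m := (le_div_iff₀ hπpos).mp hfl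
    have hlow : (k:ℝ) * π / m ≤ θ := by
      rw [div_le_iff₀ hmpos]
      nlinarith
    have hlow2 : G μ hn θ ≥ (k:ℝ) / (2 * m) := by
      rw [← hGfrac m k hm hkm]
      exact G_mono μ hn hinv hsph (by positivity) hlow hπ
    have hup : G μ hn θ ≤ ((k:ℝ) + 1) / (2 * m) := by
      by_cases hk1 : k + 1 ≤ m
      · have hθup : θ ≤ ((k:ℝ) + 1) * π / m := by
          rw [le_div_iff₀ hmpos]
          rw [div_lt_iff₀ hπpos] at hfl2
          nlinarith
        have := G_mono μ hn hinv hsph h0 hθup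
          (by
            rw [div_le_iff₀ hmpos]
            have : ((k:ℝ) + 1) ≤ m := by exact_mod_cast hk1
            nlinarith)
        have h2 := hGfrac m (k+1) hm hk1
        push_cast at h2
        rw [h2] at this
        linarith
      · have hkm' : k = m := by omega
        have hup2 : G μ hn θ ≤ 1/2 := by
          have := G_mono μ hn hinv hsph h0 hπ le_rfl
          rwa [G_pi μ hn hinv hsph] at this
        have : (1:ℝ)/2 ≤ ((k:ℝ) + 1) / (2 * m) := by
          rw [hkm']
          rw [div_le_div_iff₀ (by norm_num) (by positivity)]
          nlinarith
        linarith
    rw [abs_le]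
    constructor
    · have : (k:ℝ) / (2*m) ≥ θ/(2*π) - 1/(2*m) := by
        rw [div_lt_iff₀ hπpos] at hfl2
        rw [ge_iff_le, sub_le_iff_le_add, div_add_div _ _ (by positivity) (by positivity),
          div_le_div_iff₀ (by positivity) (by positivity)]
        nlinarith
      linarith
    · have : ((k:ℝ)+1) / (2*m) ≤ θ/(2*π) + 1/(2*m) := by
        rw [div_add_div _ _ (by positivity) (by positivity),
          div_le_div_iff₀ (by positivity) (by positivity)]
        nlinarith
      linarith
  by_contra hne
  have habs : 0 < |G μ hn θ - θ / (2 * π)| := abs_pos.2 (sub_ne_zero.2 hne)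
  obtain ⟨m, hm⟩ := exists_nat_one_div_lt habs
  have h1 := key (m+1) (by omega)
  have hmpos : (0:ℝ) < (m:ℝ)+1 := by positivity
  have : 1 / (2 * ((m:ℕ)+1:ℝ)) ≤ 1 / ((m:ℝ)+1) := by
    rw [div_le_div_iff₀ (by positivity) hmpos]
    nlinarith
  push_cast at h1
  linarith [hm]

lemma key_prob (hn : 2 ≤ n)
    (hinv : ∀ T : EuclideanSpace ℝ (Fin n) ≃ₗᵢ[ℝ] EuclideanSpace ℝ (Fin n),
      Measure.map T μ = μ)
    (hsph : μ (Metric.sphere (0 : EuclideanSpace ℝ (Fin n)) 1) = 1)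
    {u v : EuclideanSpace ℝ (Fin n)} (hu : ‖u‖ = 1) (hv : ‖v‖ = 1) :
    (μ {r : EuclideanSpace ℝ (Fin n) | ¬((0 ≤ ⟪u,r⟫) ↔ (0 ≤ ⟪v,r⟫))}).toReal
      = Real.arccos ⟪u,v⟫ / π := by
  have hπ := Real.pi_pos
  have hsplit : {r : EuclideanSpace ℝ (Fin n) | ¬((0 ≤ ⟪u,r⟫) ↔ (0 ≤ ⟪v,r⟫))}
      = lune u v ∪ lune v u := by
    ext r
    simp only [lune, Set.mem_union, Set.mem_setOf_eq, ← not_le]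
    tauto
  have hdisj : Disjoint (lune u v) (lune v u) := by
    rw [Set.disjoint_left]
    rintro r ⟨h1, h2⟩ ⟨h3, h4⟩
    linarith
  rw [hsplit, measure_union hdisj (lune_measurable _ _),
    ENNReal.toReal_add (measure_ne_top μ _) (measure_ne_top μ _)]
  have hcs : |⟪u,v⟫| ≤ 1 := by
    have := abs_real_inner_le_norm u v
    rwa [hu, hv, one_mul] at this
  rw [abs_le] at hcs
  have huu : ⟪u,u⟫ = 1 := by
    rw [real_inner_self_eq_norm_sq, hu]; norm_num
  rcases eq_or_lt_of_le hcs.2 with hc1 | hc1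
  · have huv : u = v := (inner_eq_one_iff_of_norm_eq_one hu hv).1 hc1
    subst huv
    have hemp : lune u u = ∅ := by
      ext r
      simp only [lune, Set.mem_setOf_eq, Set.mem_empty_iff_false, iff_false, not_and]
      intro h
      exact not_lt.2 h
    rw [hemp, hc1]
    simp [Real.arccos_one]
  rcases eq_or_lt_of_le hcs.1 with hcm1 | hcm1
  · have hvm : v = -u := by
      have h1 : ⟪u, -v⟫ = 1 := by rw [inner_neg_right]; linarith
      have h2 := (inner_eq_one_iff_of_norm_eq_one hu (by rw [norm_neg]; exact hv)).1 h1
      rw [h2]; simp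
    subst hvm
    have hou : Orthonormal ℝ (fun _ : Fin 1 => u) := by
      rw [orthonormal_iff_ite]
      intro i j
      rw [if_pos (Subsingleton.elim i j), huu]
    obtain ⟨b, hb⟩ := extend_onb (show 1 ≤ n by omega) hou
    set u2 := b ⟨1, by omega⟩ with hu2def
    have hb0 : b ⟨0, by omega⟩ = u := by exact hb 0
    have hu2 : ‖u2‖ = 1 := b.orthonormal.1 _
    have huu2 : ⟪u, u2⟫ = 0 := by
      rw [← hb0, hu2def]
      exact b.orthonormal.2 (by simp [Fin.ext_iff])
    obtain ⟨T, hT0, hT1⟩ := exists_iso2 hn (norm_ee hn 0) (norm_ee hn (π/2))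
      (by rw [inner_ee_ee]; simp) hu hu2 huu2
    have heeπ : ee hn π = -(ee hn 0) := by rw [ee_pi hn, ee_zero hn]
    have hTpi : T (ee hn π) = -u := by rw [heeπ, map_neg, hT0]
    have e1 : μ (lune u (-u)) = μ (lune (ee hn 0) (ee hn π)) := by
      conv_lhs => rw [← hTpi, ← hT0]
      exact lune_iso μ hinv T _ _
    have e2 : μ (lune (-u) u) = μ (lune (ee hn π) (ee hn 0)) := by
      conv_lhs => rw [← hTpi, ← hT0]
      exact lune_iso μ hinv T _ _
    have e3 : μ (lune (ee hn π) (ee hn 0)) = μ (lune (ee hn 0) (ee hn π)) := by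
      have h := lune_refl μ hn hinv π 0 π
      rw [sub_zero, sub_self] at h
      exact h
    have hGπ := G_pi μ hn hinv hsph
    unfold G at hGπ
    have hmu : ⟪u, -u⟫ = -1 := by rw [inner_neg_right, huu]
    rw [e1, e2, e3, hGπ, hmu, Real.arccos_neg_one]
    field_simp
    norm_num
  · set c := ⟪u,v⟫ with hc
    set θ := Real.arccos c with hθ
    have hθ0 : 0 < θ := Real.arccos_pos.2 hc1
    have hθπ : θ < π := by
      rcases eq_or_lt_of_le (Real.arccos_le_pi c) with h | h
      · exfalso
        have hca := Real.cos_arccos (le_of_lt hcm1) (le_of_lt hc1)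
        rw [h, Real.cos_pi] at hca
        linarith
      · exact h
    have hcosθ : Real.cos θ = c := Real.cos_arccos (by linarith) (by linarith)
    have hsinθ : Real.sin θ = Real.sqrt (1 - c^2) := Real.sin_arccos c
    have hvv : ⟪v,v⟫ = 1 := by
      rw [real_inner_self_eq_norm_sq, hv]; norm_num
    set wv := v - c • u with hwv
    have hwu : ⟪u, wv⟫ = 0 := by
      rw [hwv, inner_sub_right, real_inner_smul_right, huu, ← hc]; ring
    have hwsq : ⟪wv, wv⟫ = 1 - c^2 := by
      have h1 : ⟪v,u⟫ = c := by rw [hc]; exact real_inner_comm u v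
      have h2 : ⟪u,v⟫ = c := hc.symm
      rw [hwv]
      simp only [inner_sub_left, inner_sub_right, real_inner_smul_left, real_inner_smul_right,
        huu, hvv, h1, h2]
      try ring
    have hcpos : (0:ℝ) < 1 - c^2 := by nlinarith
    have hnwsq : ‖wv‖^2 = 1 - c^2 := by rw [← real_inner_self_eq_norm_sq, hwsq]
    have hnw : ‖wv‖ = Real.sqrt (1 - c^2) := by
      rw [← hnwsq, Real.sqrt_sq (norm_nonneg wv)]
    have hwpos : 0 < ‖wv‖ := by rw [hnw]; exact Real.sqrt_pos.2 hcpos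
    set u1 := ‖wv‖⁻¹ • wv with hu1
    have hnu1 : ‖u1‖ = 1 := by
      rw [hu1, norm_smul, Real.norm_eq_abs, abs_of_pos (inv_pos.2 hwpos),
        inv_mul_cancel₀ hwpos.ne']
    have huu1 : ⟪u, u1⟫ = 0 := by
      rw [hu1, real_inner_smul_right, hwu]; ring
    obtain ⟨T, hT0, hT1⟩ := exists_iso2 hn (norm_ee hn 0) (norm_ee hn (0 + π/2))
      (by rw [inner_ee_ee]; simp) hu hnu1 huu1
    have hTθ : T (ee hn θ) = v := by
      have hdec : ee hn θ = Real.cos θ • ee hn 0 + Real.sin θ • ee hn (0 + π/2) := by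
        simpa using ee_decomp hn 0 θ
      rw [hdec, map_add, _root_.map_smul, _root_.map_smul, hT0, hT1, hu1, smul_smul, hsinθ,
        ← hnw, mul_inv_cancel₀ hwpos.ne', one_smul, hcosθ, hwv]
      abel
    have e1 : μ (lune u v) = μ (lune (ee hn 0) (ee hn θ)) := by
      conv_lhs => rw [← hT0, ← hTθ]
      exact lune_iso μ hinv T _ _
    have e2 : μ (lune v u) = μ (lune (ee hn θ) (ee hn 0)) := by
      conv_lhs => rw [← hTθ, ← hT0]
      exact lune_iso μ hinv T _ _
    have e3 : μ (lune (ee hn θ) (ee hn 0)) = μ (lune (ee hn 0) (ee hn θ)) := by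
      have h := lune_refl μ hn hinv θ 0 θ
      rw [sub_zero, sub_self] at h
      exact h
    have hGθ : G μ hn θ = θ / (2*π) := G_eq μ hn hinv hsph (le_of_lt hθ0) (le_of_lt hθπ)
    unfold G at hGθ
    rw [e1, e2, e3, hGθ]
    field_simp
    ring

end GW

theorem stmt_8 (n : ℕ) (hn : 2 ≤ n)
    (w : Matrix (Fin n) (Fin n) ℝ) (hw : ∀ i j : Fin n, i < j → 0 ≤ w i j)
    (v : Fin n → EuclideanSpace ℝ (Fin n)) (hv : ∀ i, ‖v i‖ = 1)
    (μ : Measure (EuclideanSpace ℝ (Fin n))) [IsProbabilityMeasure μ]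
    (hsph : μ (Metric.sphere (0 : EuclideanSpace ℝ (Fin n)) 1) = 1)
    (hinv : ∀ T : EuclideanSpace ℝ (Fin n) ≃ₗᵢ[ℝ] EuclideanSpace ℝ (Fin n),
      Measure.map T μ = μ)
    (C : EuclideanSpace ℝ (Fin n) → ℝ)
    (hC : ∀ r, C r = ∑ i, ∑ j ∈ Finset.Ioi i,
      if sgn ⟪v i, r⟫ ≠ sgn ⟪v j, r⟫ then w i j else 0)
    (α : ℝ) (hα : IsLeast ((fun t : ℝ => 2 * t / (π * (1 - Real.cos t))) '' Ioc 0 π) α) :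
    (∫ r, C r ∂μ) = ∑ i, ∑ j ∈ Finset.Ioi i, w i j * Real.arccos ⟪v i, v j⟫ / π ∧
    (∫ r, C r ∂μ) ≥ α * ((1 / 2) * ∑ i, ∑ j ∈ Finset.Ioi i, w i j * (1 - ⟪v i, v j⟫)) := by
  have hπ := Real.pi_pos
  set X : Fin n → Fin n → Set (EuclideanSpace ℝ (Fin n)) :=
    fun i j => {r | ¬((0 ≤ ⟪v i, r⟫) ↔ (0 ≤ ⟪v j, r⟫))} with hX
  have hXsplit : ∀ i j, X i j = (GW.lune (v i) (v j)) ∪ (GW.lune (v j) (v i)) := by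
    intro i j
    ext r
    simp only [hX, GW.lune, Set.mem_union, Set.mem_setOf_eq, ← not_le]
    tauto
  have hXmeas : ∀ i j, MeasurableSet (X i j) := by
    intro i j
    rw [hXsplit i j]
    exact (GW.lune_measurable _ _).union (GW.lune_measurable _ _)
  have hsgn : ∀ (a b : ℝ), (sgn a ≠ sgn b) ↔ ¬((0 ≤ a) ↔ (0 ≤ b)) := by
    intro a b
    unfold sgn
    by_cases ha : 0 ≤ a <;> by_cases hb : 0 ≤ b <;> simp [ha, hb] <;> norm_num
  have hfun : ∀ i j, (fun r => if sgn ⟪v i, r⟫ ≠ sgn ⟪v j, r⟫ then w i j else 0)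
      = Set.indicator (X i j) (fun _ => w i j) := by
    intro i j
    funext r
    rw [Set.indicator_apply]
    exact if_congr ((hsgn _ _).trans Iff.rfl) rfl rfl
  have hint : ∀ i j, Integrable (fun r => if sgn ⟪v i, r⟫ ≠ sgn ⟪v j, r⟫ then w i j else 0) μ := by
    intro i j
    rw [hfun i j]
    exact (integrable_indicator_iff (hXmeas i j)).2
      (integrableOn_const (measure_ne_top μ _))
  have hterm : ∀ i j, ∫ r, (if sgn ⟪v i, r⟫ ≠ sgn ⟪v j, r⟫ then w i j else 0) ∂μ
      = w i j * Real.arccos ⟪v i, v j⟫ / π := by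
    intro i j
    rw [hfun i j, integral_indicator_const _ (hXmeas i j)]
    have := GW.key_prob μ hn hinv hsph (hv i) (hv j)
    rw [hX] at *
    rw [measureReal_def, this, smul_eq_mul]
    ring
  have part1 : (∫ r, C r ∂μ) = ∑ i, ∑ j ∈ Finset.Ioi i, w i j * Real.arccos ⟪v i, v j⟫ / π := by
    have hstep : (∫ r, C r ∂μ) = ∫ r, ∑ i, ∑ j ∈ Finset.Ioi i,
        (if sgn ⟪v i, r⟫ ≠ sgn ⟪v j, r⟫ then w i j else 0) ∂μ :=
      integral_congr_ae (ae_of_all μ fun r => hC r)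
    rw [hstep, integral_finset_sum _ (fun i _ => integrable_finset_sum _ (fun j _ => hint i j))]
    refine Finset.sum_congr rfl fun i _ => ?_
    rw [integral_finset_sum _ (fun j _ => hint i j)]
    exact Finset.sum_congr rfl fun j _ => hterm i j
  refine ⟨part1, ?_⟩
  rw [part1]
  have hbound : ∀ i j : Fin n, j ∈ Finset.Ioi i →
      α * ((1/2) * (w i j * (1 - ⟪v i, v j⟫))) ≤ w i j * Real.arccos ⟪v i, v j⟫ / π := by
    intro i j hij
    have hwij : 0 ≤ w i j := hw i j (Finset.mem_Ioi.1 hij)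
    have hcs : |⟪v i, v j⟫| ≤ 1 := by
      have := abs_real_inner_le_norm (v i) (v j)
      rwa [hv i, hv j, one_mul] at this
    rw [abs_le] at hcs
    set c := (⟪v i, v j⟫ : ℝ) with hc
    rcases eq_or_lt_of_le hcs.2 with h1 | h1
    · rw [h1, Real.arccos_one]
      simp
    · set θ := Real.arccos c with hθ
      have hθ0 : 0 < θ := Real.arccos_pos.2 h1
      have hθπ : θ ≤ π := Real.arccos_le_pi c
      have hcosθ : Real.cos θ = c := Real.cos_arccos hcs.1 hcs.2
      have hαle : α ≤ 2 * θ / (π * (1 - Real.cos θ)) :=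
        hα.2 ⟨θ, ⟨hθ0, hθπ⟩, rfl⟩
      rw [hcosθ] at hαle
      have hcpos : 0 < 1 - c := by linarith
      have hfac : 0 ≤ (1/2) * (w i j * (1 - c)) := by positivity
      have hmul := mul_le_mul_of_nonneg_right hαle hfac
      have heq : 2 * θ / (π * (1 - c)) * ((1/2) * (w i j * (1 - c))) = w i j * θ / π := by
        field_simp
      linarith
  calc α * ((1/2) * ∑ i, ∑ j ∈ Finset.Ioi i, w i j * (1 - ⟪v i, v j⟫))
      = ∑ i, ∑ j ∈ Finset.Ioi i, α * ((1/2) * (w i j * (1 - ⟪v i, v j⟫))) := by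
        rw [Finset.mul_sum, Finset.mul_sum]
        refine Finset.sum_congr rfl fun i _ => ?_
        rw [Finset.mul_sum, Finset.mul_sum]
    _ ≤ ∑ i, ∑ j ∈ Finset.Ioi i, w i j * Real.arccos ⟪v i, v j⟫ / π :=
        Finset.sum_le_sum fun i _ => Finset.sum_le_sum fun j hj => hbound i j hj
end

section
/- Let θ₀ be the unique solution in (π/2, π) of the equation 1 - cos θ = θ sin θ. Then 2/(π sin θ₀) = min_{0 < θ ≤ π} 2θ/(π(1 - cos θ)), i.e., the GW constant α equals 2/(π sin θ₀). -/
open Real Set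

theorem stmt_15 (θ₀ : ℝ) (hθ₀ : θ₀ ∈ Ioo (π / 2) π)
    (heq : 1 - Real.cos θ₀ = θ₀ * Real.sin θ₀)
    (huniq : ∀ θ ∈ Ioo (π / 2) π, 1 - Real.cos θ = θ * Real.sin θ → θ = θ₀) :
    IsLeast ((fun θ : ℝ => 2 * θ / (π * (1 - Real.cos θ))) '' Ioc 0 π)
      (2 / (π * Real.sin θ₀)) := by
  obtain ⟨h1, h2⟩ := hθ₀
  have hπ : (0:ℝ) < π := Real.pi_pos
  have hθpos : 0 < θ₀ := lt_trans (by linarith) h1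
  have hs : 0 < Real.sin θ₀ := Real.sin_pos_of_pos_of_lt_pi hθpos h2
  set s := Real.sin θ₀ with hs_def
  set φ : ℝ → ℝ := fun t => t * s - 1 + Real.cos t with hφ
  have hder : ∀ t : ℝ, HasDerivAt φ (s - Real.sin t) t := by
    intro t
    have h := (((hasDerivAt_id t).mul_const s).sub_const 1).add (Real.hasDerivAt_cos t)
    exact h.congr_deriv (by ring)
  have hderiv : ∀ t : ℝ, deriv φ t = s - Real.sin t := fun t => (hder t).deriv
  have hcont : Continuous φ := by
    fun_prop
  have hdiff : Differentiable ℝ φ := fun t => (hder t).differentiableAt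
  have hφ0 : φ 0 = 0 := by simp [hφ]
  have hφθ : φ θ₀ = 0 := by simp only [hφ]; linarith
  -- sin (π - θ₀) = s
  have hsps : Real.sin (π - θ₀) = s := Real.sin_pi_sub θ₀
  have hkey : ∀ x ∈ Ioc (0:ℝ) π, 0 ≤ φ x := by
    intro x ⟨hx0, hxπ⟩
    rcases le_total x (π - θ₀) with hc | hc
    · -- monotone on [0, π - θ₀]
      have hmono : MonotoneOn φ (Icc 0 (π - θ₀)) := by
        apply monotoneOn_of_deriv_nonneg (convex_Icc _ _) hcont.continuousOn
          hdiff.differentiableOn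
        intro t ht
        rw [interior_Icc] at ht
        rw [hderiv]
        have : Real.sin t ≤ s := by
          rw [← hsps]
          exact Real.sin_le_sin_of_le_of_le_pi_div_two (by linarith [ht.1])
            (by linarith) (le_of_lt ht.2)
        linarith
      have := hmono ⟨le_refl 0, by linarith⟩ ⟨le_of_lt hx0, hc⟩ (le_of_lt hx0)
      rw [hφ0] at this; exact this
    · rcases le_total x θ₀ with hc2 | hc2
      · -- antitone on [π - θ₀, θ₀]
        have hanti : AntitoneOn φ (Icc (π - θ₀) θ₀) := by
          apply antitoneOn_of_deriv_nonpos (convex_Icc _ _) hcont.continuousOn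
            hdiff.differentiableOn
          intro t ht
          rw [interior_Icc] at ht
          rw [hderiv]
          have : s ≤ Real.sin t := by
            rcases le_total t (π / 2) with htc | htc
            · rw [← hsps]
              exact Real.sin_le_sin_of_le_of_le_pi_div_two (by linarith [ht.1]) htc
                (le_of_lt ht.1)
            · have : Real.sin θ₀ ≤ Real.sin t := by
                rw [← Real.sin_pi_sub θ₀, ← Real.sin_pi_sub t]
                exact Real.sin_le_sin_of_le_of_le_pi_div_two (by linarith)
                  (by linarith) (by linarith [ht.2])
              exact this
          linarith
        have := hanti ⟨hc, hc2⟩ ⟨le_of_lt (by linarith : π - θ₀ < θ₀), le_refl _⟩ hc2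
        rw [hφθ] at this; exact this
      · -- monotone on [θ₀, π]
        have hmono : MonotoneOn φ (Icc θ₀ π) := by
          apply monotoneOn_of_deriv_nonneg (convex_Icc _ _) hcont.continuousOn
            hdiff.differentiableOn
          intro t ht
          rw [interior_Icc] at ht
          rw [hderiv]
          have : Real.sin t ≤ s := by
            rw [hs_def, ← Real.sin_pi_sub θ₀, ← Real.sin_pi_sub t]
            exact Real.sin_le_sin_of_le_of_le_pi_div_two (by linarith [ht.2])
              (by linarith) (by linarith [ht.1])
          linarith
        have := hmono ⟨le_refl _, le_of_lt h2⟩ ⟨hc2, hxπ⟩ hc2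
        rw [hφθ] at this; exact this
  have hcoslt : ∀ x ∈ Ioc (0:ℝ) π, Real.cos x < 1 := by
    intro x ⟨hx0, hxπ⟩
    have := Real.strictAntiOn_cos ⟨le_refl 0, le_of_lt hπ⟩ ⟨le_of_lt hx0, hxπ⟩ hx0
    simpa using this
  constructor
  · refine ⟨θ₀, ⟨hθpos, le_of_lt h2⟩, ?_⟩
    show 2 * θ₀ / (π * (1 - Real.cos θ₀)) = 2 / (π * s)
    rw [heq]
    field_simp
  · rintro y ⟨x, hx, rfl⟩
    have hc1 : Real.cos x < 1 := hcoslt x hx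
    have hkeyx : 1 - Real.cos x ≤ x * s := by
      have := hkey x hx
      simp only [hφ] at this
      linarith
    rw [div_le_div_iff₀ (by positivity) (by nlinarith [hx.1])]
    have hx0 := hx.1
    nlinarith [mul_pos hπ hs]
end

section
/- The equation 1 - cos θ = θ sin θ has a unique solution θ₀ in the interval (π/2, π), and θ₀ ∈ (2.33, 2.34). -/
open Real Set

private lemma nonneg_of_deriv (f f' : ℝ → ℝ) (hd : ∀ x, HasDerivAt f (f' x) x)
    (h0 : f 0 = 0) (hpos : ∀ x, 0 ≤ x → 0 ≤ f' x) {x : ℝ} (hx : 0 ≤ x) : 0 ≤ f x := by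
  have hmono : MonotoneOn f (Ici 0) := by
    apply monotoneOn_of_deriv_nonneg (convex_Ici 0)
      (fun y _ => (hd y).continuousAt.continuousWithinAt)
      (fun y _ => (hd y).differentiableAt.differentiableWithinAt)
    intro y hy
    rw [(hd y).deriv]
    exact hpos y (le_of_lt (by simpa using hy))
  calc (0:ℝ) = f 0 := h0.symm
  _ ≤ f x := hmono self_mem_Ici hx hx

private lemma sin_ge3 {x : ℝ} (hx : 0 ≤ x) : x - x^3/6 ≤ Real.sin x := by
  have := nonneg_of_deriv (fun x => Real.sin x - (x - x^3/6))
    (fun x => Real.cos x - (1 - x^2/2)) (fun x => by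
      have h := (Real.hasDerivAt_sin x).sub ((hasDerivAt_id x).sub ((hasDerivAt_pow 3 x).div_const 6))
      refine h.congr_deriv ?_; push_cast; ring)
    (by norm_num) (fun x _ => by nlinarith [Real.one_sub_sq_div_two_le_cos (x := x)]) hx
  linarith

private lemma cos_le4 {x : ℝ} (hx : 0 ≤ x) : Real.cos x ≤ 1 - x^2/2 + x^4/24 := by
  have := nonneg_of_deriv (fun x => (1 - x^2/2 + x^4/24) - Real.cos x)
    (fun x => Real.sin x - (x - x^3/6)) (fun x => by
      have h := (((hasDerivAt_const x (1:ℝ)).sub ((hasDerivAt_pow 2 x).div_const 2)).add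
        ((hasDerivAt_pow 4 x).div_const 24)).sub (Real.hasDerivAt_cos x)
      refine h.congr_deriv ?_; push_cast; ring)
    (by norm_num) (fun x hx => by have := sin_ge3 hx; linarith) hx
  linarith

private lemma sin_le5 {x : ℝ} (hx : 0 ≤ x) : Real.sin x ≤ x - x^3/6 + x^5/120 := by
  have := nonneg_of_deriv (fun x => (x - x^3/6 + x^5/120) - Real.sin x)
    (fun x => (1 - x^2/2 + x^4/24) - Real.cos x) (fun x => by
      have h := (((hasDerivAt_id x).sub ((hasDerivAt_pow 3 x).div_const 6)).add
        ((hasDerivAt_pow 5 x).div_const 120)).sub (Real.hasDerivAt_sin x)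
      refine h.congr_deriv ?_; push_cast; ring)
    (by norm_num) (fun x hx => by have := cos_le4 hx; linarith) hx
  linarith

private lemma cos_ge6 {x : ℝ} (hx : 0 ≤ x) : 1 - x^2/2 + x^4/24 - x^6/720 ≤ Real.cos x := by
  have := nonneg_of_deriv (fun x => Real.cos x - (1 - x^2/2 + x^4/24 - x^6/720))
    (fun x => (x - x^3/6 + x^5/120) - Real.sin x) (fun x => by
      have h := (Real.hasDerivAt_cos x).sub ((((hasDerivAt_const x (1:ℝ)).sub
        ((hasDerivAt_pow 2 x).div_const 2)).add ((hasDerivAt_pow 4 x).div_const 24)).sub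
        ((hasDerivAt_pow 6 x).div_const 720))
      refine h.congr_deriv ?_; push_cast; ring)
    (by norm_num) (fun x hx => by have := sin_le5 hx; linarith) hx
  linarith

private lemma sin_ge7 {x : ℝ} (hx : 0 ≤ x) :
    x - x^3/6 + x^5/120 - x^7/5040 ≤ Real.sin x := by
  have := nonneg_of_deriv (fun x => Real.sin x - (x - x^3/6 + x^5/120 - x^7/5040))
    (fun x => Real.cos x - (1 - x^2/2 + x^4/24 - x^6/720)) (fun x => by
      have h := (Real.hasDerivAt_sin x).sub ((((hasDerivAt_id x).sub
        ((hasDerivAt_pow 3 x).div_const 6)).add ((hasDerivAt_pow 5 x).div_const 120)).sub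
        ((hasDerivAt_pow 7 x).div_const 5040))
      refine h.congr_deriv ?_; push_cast; ring)
    (by norm_num) (fun x hx => by have := cos_ge6 hx; linarith) hx
  linarith

private lemma g233 : 1 - Real.cos 2.33 - 2.33 * Real.sin 2.33 < 0 := by
  have hπl : 3.141592 < π := Real.pi_gt_d6
  have hπu : π < 3.141593 := Real.pi_lt_d6
  set x : ℝ := π - 2.33 with hxdef
  have hl : (0.811592:ℝ) ≤ x := by rw [hxdef]; linarith
  have hu : x ≤ 0.811593 := by rw [hxdef]; linarith
  have hx0 : (0:ℝ) ≤ x := le_trans (by norm_num) hl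
  have h233 : (2.33:ℝ) = π - x := by rw [hxdef]; ring
  have hcoef : π - x = (2.33:ℝ) := h233.symm
  rw [h233, Real.cos_pi_sub, Real.sin_pi_sub, hcoef]
  have hc := cos_le4 hx0
  have hs := sin_ge7 hx0
  have l2 : (0.811592:ℝ)^2 ≤ x^2 := pow_le_pow_left₀ (by norm_num) hl 2
  have l5 : (0.811592:ℝ)^5 ≤ x^5 := pow_le_pow_left₀ (by norm_num) hl 5
  have u3 : x^3 ≤ (0.811593:ℝ)^3 := pow_le_pow_left₀ hx0 hu 3
  have u4 : x^4 ≤ (0.811593:ℝ)^4 := pow_le_pow_left₀ hx0 hu 4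
  have u7 : x^7 ≤ (0.811593:ℝ)^7 := pow_le_pow_left₀ hx0 hu 7
  norm_num at l2 l5 u3 u4 u7 ⊢
  linarith

private lemma g234 : 0 < 1 - Real.cos 2.34 - 2.34 * Real.sin 2.34 := by
  have hπl : 3.141592 < π := Real.pi_gt_d6
  have hπu : π < 3.141593 := Real.pi_lt_d6
  set x : ℝ := π - 2.34 with hxdef
  have hl : (0.801592:ℝ) ≤ x := by rw [hxdef]; linarith
  have hu : x ≤ 0.801593 := by rw [hxdef]; linarith
  have hx0 : (0:ℝ) ≤ x := le_trans (by norm_num) hl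
  have h234 : (2.34:ℝ) = π - x := by rw [hxdef]; ring
  have hcoef : π - x = (2.34:ℝ) := h234.symm
  rw [h234, Real.cos_pi_sub, Real.sin_pi_sub, hcoef]
  have hc := cos_ge6 hx0
  have hs := sin_le5 hx0
  have l3 : (0.801592:ℝ)^3 ≤ x^3 := pow_le_pow_left₀ (by norm_num) hl 3
  have l4 : (0.801592:ℝ)^4 ≤ x^4 := pow_le_pow_left₀ (by norm_num) hl 4
  have u2 : x^2 ≤ (0.801593:ℝ)^2 := pow_le_pow_left₀ hx0 hu 2
  have u5 : x^5 ≤ (0.801593:ℝ)^5 := pow_le_pow_left₀ hx0 hu 5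
  have u6 : x^6 ≤ (0.801593:ℝ)^6 := pow_le_pow_left₀ hx0 hu 6
  norm_num at l3 l4 u2 u5 u6 ⊢
  linarith

theorem stmt_16 :
    ∃ θ₀ : ℝ, (θ₀ ∈ Ioo (π / 2) π ∧ 1 - Real.cos θ₀ = θ₀ * Real.sin θ₀) ∧
      (∀ θ ∈ Ioo (π / 2) π, 1 - Real.cos θ = θ * Real.sin θ → θ = θ₀) ∧
      θ₀ ∈ Ioo (2.33 : ℝ) 2.34 := by
  have hπl : 3.141592 < π := Real.pi_gt_d6
  have hπu : π < 3.141593 := Real.pi_lt_d6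
  set f : ℝ → ℝ := fun θ => 1 - Real.cos θ - θ * Real.sin θ with hfdef
  have hd : ∀ θ : ℝ, HasDerivAt f (-(θ * Real.cos θ)) θ := by
    intro θ
    have h := ((hasDerivAt_const θ (1:ℝ)).sub (Real.hasDerivAt_cos θ)).sub
      ((hasDerivAt_id θ).mul (Real.hasDerivAt_sin θ))
    refine h.congr_deriv ?_; simp only [id_eq]; ring
  have hmono : StrictMonoOn f (Icc (π/2) π) := by
    apply strictMonoOn_of_deriv_pos (convex_Icc _ _)
      (fun θ _ => (hd θ).continuousAt.continuousWithinAt)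
    intro θ hθ
    rw [interior_Icc] at hθ
    rw [(hd θ).deriv]
    have hcos : Real.cos θ < 0 :=
      Real.cos_neg_of_pi_div_two_lt_of_lt hθ.1 (by linarith [hθ.2, Real.pi_pos])
    have hθpos : 0 < θ := by linarith [hθ.1, Real.pi_pos]
    have := mul_pos hθpos (neg_pos.mpr hcos)
    linarith
  have hcont : ContinuousOn f (Icc (2.33:ℝ) 2.34) := by
    apply Continuous.continuousOn; fun_prop
  obtain ⟨θ₀, hmem, hroot⟩ :=
    intermediate_value_Ioo (by norm_num : (2.33:ℝ) ≤ 2.34) hcont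
      (Set.mem_Ioo.mpr ⟨g233, g234⟩)
  have hmemIoo : θ₀ ∈ Ioo (π/2) π := ⟨by linarith [hmem.1], by linarith [hmem.2]⟩
  refine ⟨θ₀, ⟨hmemIoo, by have := hroot; simp only [hfdef] at this; linarith⟩, ?_, hmem⟩
  intro θ hθ heq
  have h1 : f θ = 0 := by simp only [hfdef]; linarith
  exact hmono.injOn (⟨hθ.1.le, hθ.2.le⟩ : θ ∈ Icc (π/2) π)
    ⟨hmemIoo.1.le, hmemIoo.2.le⟩ (by rw [h1, hroot])
end

section
/- For all θ ∈ [0, π], θ/π ≥ (2/(π sin θ₀)) · (1 - cos θ)/2, where θ₀ ∈ (π/2, π) satisfies 1 - cos θ₀ = θ₀ sin θ₀; equivalently, sin(θ₀) · θ ≥ 1 - cos θ for all θ ∈ [0, π]. -/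
open Real Set

theorem stmt_19 (θ₀ : ℝ) (hθ₀ : θ₀ ∈ Ioo (π / 2) π)
    (heq : 1 - Real.cos θ₀ = θ₀ * Real.sin θ₀) :
    ∀ θ ∈ Icc (0 : ℝ) π,
      θ / π ≥ 2 / (π * Real.sin θ₀) * ((1 - Real.cos θ) / 2) ∧
      Real.sin θ₀ * θ ≥ 1 - Real.cos θ := by
  obtain ⟨h1, h2⟩ := hθ₀
  have hπ : (0:ℝ) < π := Real.pi_pos
  have hθ₀pos : 0 < θ₀ := lt_trans (by positivity) h1
  have hs : 0 < Real.sin θ₀ := Real.sin_pos_of_pos_of_lt_pi hθ₀pos h2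
  set s := Real.sin θ₀ with hsdef
  have hderiv : ∀ x : ℝ, HasDerivAt (fun θ => s * θ + Real.cos θ) (s - Real.sin x) x := by
    intro x
    have h := ((hasDerivAt_id x).const_mul s).add (Real.hasDerivAt_cos x)
    exact h.congr_deriv (by simp; ring)
  have hcont : Continuous (fun θ => s * θ + Real.cos θ) := by continuity
  have hmono : ∀ a b : ℝ, (∀ x ∈ Icc a b, Real.sin x ≤ s) →
      MonotoneOn (fun θ => s * θ + Real.cos θ) (Icc a b) := by
    intro a b hle
    apply monotoneOn_of_deriv_nonneg (convex_Icc a b) hcont.continuousOn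
    · intro x _
      exact (hderiv x).differentiableAt.differentiableWithinAt
    · intro x hx
      rw [interior_Icc] at hx
      rw [(hderiv x).deriv]
      have := hle x ⟨le_of_lt hx.1, le_of_lt hx.2⟩
      linarith
  have hanti : ∀ a b : ℝ, (∀ x ∈ Icc a b, s ≤ Real.sin x) →
      AntitoneOn (fun θ => s * θ + Real.cos θ) (Icc a b) := by
    intro a b hle
    apply antitoneOn_of_deriv_nonpos (convex_Icc a b) hcont.continuousOn
    · intro x _
      exact (hderiv x).differentiableAt.differentiableWithinAt
    · intro x hx
      rw [interior_Icc] at hx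
      rw [(hderiv x).deriv]
      have := hle x ⟨le_of_lt hx.1, le_of_lt hx.2⟩
      linarith
  have hgθ₀ : s * θ₀ + Real.cos θ₀ = 1 := by
    rw [hsdef]; linarith [heq]
  have hπθ₀ : π - θ₀ ≤ π / 2 := by linarith
  have hsinπθ₀ : Real.sin (π - θ₀) = s := Real.sin_pi_sub θ₀
  have key : ∀ θ ∈ Icc (0:ℝ) π, s * θ + Real.cos θ ≥ 1 := by
    intro θ hθ
    obtain ⟨hθ0, hθπ⟩ := hθ
    rcases le_or_gt θ (π - θ₀) with hc | hc
    · have hm := hmono 0 (π - θ₀) (by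
        intro x hx
        rw [← hsinπθ₀]
        exact Real.sin_le_sin_of_le_of_le_pi_div_two (by linarith [hx.1]) hπθ₀ hx.2)
      have h' : s * 0 + Real.cos 0 ≤ s * θ + Real.cos θ :=
        hm ⟨le_refl 0, by linarith⟩ ⟨hθ0, hc⟩ hθ0
      simp [Real.cos_zero] at h'
      linarith
    · rcases le_or_gt θ θ₀ with hc2 | hc2
      · have ha := hanti (π - θ₀) θ₀ (by
          intro x hx
          rcases le_or_gt x (π / 2) with hx2 | hx2
          · rw [← hsinπθ₀]
            exact Real.sin_le_sin_of_le_of_le_pi_div_two (by linarith) hx2 hx.1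
          · rw [← Real.sin_pi_sub x, ← hsinπθ₀]
            exact Real.sin_le_sin_of_le_of_le_pi_div_two (by linarith [hx.2])
              (by linarith [hx2]) (by linarith [hx.2]))
        have h' : s * θ₀ + Real.cos θ₀ ≤ s * θ + Real.cos θ :=
          ha ⟨le_of_lt hc, hc2⟩ ⟨by linarith, le_refl θ₀⟩ hc2
        linarith [hgθ₀]
      · have hm := hmono θ₀ π (by
          intro x hx
          rw [← Real.sin_pi_sub x, hsdef, ← Real.sin_pi_sub θ₀]
          exact Real.sin_le_sin_of_le_of_le_pi_div_two (by linarith [hx.2])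
            hπθ₀ (by linarith [hx.1]))
        have h' : s * θ₀ + Real.cos θ₀ ≤ s * θ + Real.cos θ :=
          hm ⟨le_refl θ₀, le_of_lt h2⟩ ⟨le_of_lt hc2, hθπ⟩ (le_of_lt hc2)
        linarith [hgθ₀]
  intro θ hθ
  have hkey := key θ hθ
  have h2' : s * θ ≥ 1 - Real.cos θ := by linarith
  refine ⟨?_, h2'⟩
  rw [ge_iff_le, div_mul_eq_mul_div, div_le_div_iff₀ (by positivity) hπ]
  nlinarith [h2', hπ]
end
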